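/- arXiv:1712.06119 — 12 statements merged into one kernel-verified Lean document; each statement's English description precedes it below -/
import Mathlib

section
/- For any finite family of (r-1)(d+1)+1 points in R^d (with repetitions allowed), there is a partition of the family into r parts such that the intersection of the convex hulls of the r parts is nonempty. -/
/-!
Sarkaria's proof. Put `r = s + 1`, lift each point `f i` to `(f i, 1) ∈ ℝ^(d+1)` and let
`v₀, …, v_s ∈ ℝ^s` be vectors whose only linear relations are the multiples of `∑ v_j = 0`. For each
`i` the `r` tensors `v_j ⊗ (f i, 1)` sum to zero, so `0` lies in their convex hull, and in
`ℝ^s ⊗ ℝ^(d+1)`, of dimension `s(d+1)`, the colorful Carathéodory theorem picks a color `c i` for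
every `i` with `0 = ∑ λ_i v_(c i) ⊗ (f i, 1)` a convex combination. Grouping by color gives
`∑_j v_j ⊗ W_j = 0` with `W_j = ∑_(c i = j) λ_i (f i, 1)`, so all `W_j` are equal: every color class
has mass `1/r` and the same moment, hence the same center of mass.

Colorful Carathéodory (Bárány): let `x` be the point of least norm on all colorful hulls, lying in
the hull of the choice `c`, and suppose `x ≠ 0`. Then `‖x‖² ≤ ⟪x, y⟫` on every colorful hull that
contains `x`. If `x` were in the hull of the points of `c` of all colors but `i₀`, swapping in a
point `p` of color `i₀` with `⟪x, p⟫ ≤ 0` would violate this. So a Carathéodory decomposition of `x`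
uses every color, hence is a positive combination of an affine basis, and `x` is interior to its
hull, which is impossible for a nonzero point of least norm.
-/

open Set Module
open scoped RealInnerProductSpace

section ConvexHull

variable {ι E : Type*} [AddCommGroup E] [Module ℝ E]

theorem exists_weights_of_mem_convexHull_range [Fintype ι] {v : ι → E} {x : E}
    (hx : x ∈ convexHull ℝ (range v)) :
    ∃ w : ι → ℝ, (∀ i, 0 ≤ w i) ∧ ∑ i, w i = 1 ∧ ∑ i, w i • v i = x := by
  classical
  have hv : range v = Fintype.linearCombination ℝ v '' range fun i => Pi.single i 1 := by
    rw [← range_comp]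
    simp [Function.comp_def, Fintype.linearCombination_apply_single]
  rw [hv, ← LinearMap.image_convexHull, convexHull_rangle_single_eq_stdSimplex] at hx
  obtain ⟨w, ⟨hw0, hw1⟩, rfl⟩ := hx
  exact ⟨w, hw0, hw1, (Fintype.linearCombination_apply ℝ v w).symm⟩

theorem zero_mem_convexHull_range_of_sum_eq_zero [Fintype ι] [Nonempty ι] {v : ι → E}
    (hv : ∑ i, v i = 0) : (0 : E) ∈ convexHull ℝ (range v) :=
  mem_convexHull_of_exists_fintype (fun _ => (Fintype.card ι : ℝ)⁻¹) v (fun _ => by positivity)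
    (by simp [Finset.card_univ]) mem_range_self (by rw [← Finset.smul_sum, hv, smul_zero])

theorem inv_smul_mem_iInter_convexHull_of_fiberwise_sums_eq {κ : Type*} [Fintype ι]
    [DecidableEq κ] (c : ι → κ) {w : ι → ℝ} (hw0 : ∀ i, 0 ≤ w i) (f : ι → E) {μ : ℝ}
    (hμ : 0 < μ) {p : E} (hmass : ∀ j, ∑ i with c i = j, w i = μ)
    (hmoment : ∀ j, ∑ i with c i = j, w i • f i = p) :
    μ⁻¹ • p ∈ ⋂ j, convexHull ℝ (f '' {i | c i = j}) := by
  refine mem_iInter.mpr fun j => ?_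
  have hcm : (Finset.univ.filter (c · = j)).centerMass w f = μ⁻¹ • p := by
    rw [Finset.centerMass, hmass, hmoment]
  rw [← hcm]
  refine Finset.centerMass_mem_convexHull _ (fun i _ => hw0 i) (hmass j ▸ hμ) fun i hi => ?_
  exact mem_image_of_mem f (Finset.mem_filter.mp hi).2

end ConvexHull

section MinimalNorm

variable {E : Type*} [NormedAddCommGroup E]

theorem eq_zero_of_isMinOn_norm_of_mem_interior [NormedSpace ℝ E] {s : Set E} {x : E}
    (hmin : IsMinOn (‖·‖) s x) (hx : x ∈ interior s) : x = 0 := by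
  have hglobal := IsMinOn.of_isLocalMin_of_convex_univ
    (hmin.isLocalMin (mem_interior_iff_mem_nhds.mp hx)) (convexOn_norm convex_univ)
  simpa using hglobal 0

variable [InnerProductSpace ℝ E]

theorem exists_inner_nonpos_of_zero_mem_convexHull {κ : Type*} {p : κ → E}
    (h : (0 : E) ∈ convexHull ℝ (range p)) (x : E) : ∃ j, ⟪x, p j⟫ ≤ 0 := by
  by_contra! hpos
  have hsub : range p ⊆ {y | 0 < ⟪x, y⟫} := by
    rintro _ ⟨j, rfl⟩
    exact hpos j
  simpa using convexHull_min hsub (convex_halfSpace_gt (innerₛₗ ℝ x).isLinear 0) h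

theorem IsMinOn.norm_sq_le_inner {K : Set E} {x y : E} (hmin : IsMinOn (‖·‖) K x)
    (hK : Convex ℝ K) (hx : x ∈ K) (hy : y ∈ K) : ‖x‖ ^ 2 ≤ ⟪x, y⟫ := by
  have hmin_sq : IsMinOn (fun z => ‖z‖ ^ 2) K x := fun z hz => by
    have : ‖x‖ ≤ ‖z‖ := hmin hz
    simp only [mem_ofPred_eq]
    gcongr
  have hderiv := hmin_sq.localize.hasFDerivWithinAt_nonneg
    (hasStrictFDerivAt_norm_sq x).hasFDerivAt.hasFDerivWithinAt
    (sub_mem_posTangentConeAt_of_segment_subset (hK.segment_subset hx hy))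
  simp only [FunLike.coe_smul, Pi.smul_apply, innerSL_apply_apply, inner_sub_right,
    real_inner_self_eq_norm_sq, nsmul_eq_mul, Nat.cast_ofNat] at hderiv
  linarith

end MinimalNorm

theorem mem_interior_convexHull_of_forall_notMem_convexHull_image_ne {ι E : Type*}
    [NormedAddCommGroup E] [NormedSpace ℝ E] [FiniteDimensional ℝ E] [Fintype ι]
    (hι : finrank ℝ E + 1 ≤ Fintype.card ι) {p : ι → E} {x : E}
    (hx : x ∈ convexHull ℝ (range p)) (hface : ∀ i₀, x ∉ convexHull ℝ (p '' {i | i ≠ i₀})) :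
    x ∈ interior (convexHull ℝ (range p)) := by
  obtain ⟨κ, _, z, w, hzp, hz, hw0, hw1, rfl⟩ := eq_pos_convex_span_of_mem_convexHull hx
  have hcover : ∀ i₀, ∃ k, ∀ i, z k = p i → i = i₀ := by
    intro i₀
    by_contra! h
    refine hface i₀ (mem_convexHull_of_exists_fintype w z (fun k => (hw0 k).le) hw1
      (fun k => ?_) rfl)
    obtain ⟨i, hi, hne⟩ := h k
    exact ⟨i, hne, hi.symm⟩
  choose g hg using hcover
  have hg_inj : Function.Injective g := fun i₀ i₁ h => by
    obtain ⟨i, hi⟩ := hzp (mem_range_self (g i₀))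
    exact (hg i₀ i hi.symm).symm.trans (hg i₁ i (h ▸ hi.symm))
  have hcard : Fintype.card κ = finrank ℝ E + 1 :=
    le_antisymm (hz.card_le_finrank_succ.trans (by grw [Submodule.finrank_le]))
      (hι.trans (Fintype.card_le_of_injective g hg_inj))
  let b : AffineBasis κ ℝ E := ⟨z, hz, hz.affineSpan_eq_top_iff_card_eq_finrank_add_one.mpr hcard⟩
  refine interior_mono (convexHull_mono hzp) ?_
  change _ ∈ interior (convexHull ℝ (range b))
  rw [b.interior_convexHull, ← Finset.univ.affineCombination_eq_linear_combination z w hw1]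
  intro k
  rw [show z = b from rfl, b.coord_apply_combination_of_mem (Finset.mem_univ k) hw1]
  exact hw0 k

section Colorful

variable {ι κ E : Type*} [NormedAddCommGroup E] [InnerProductSpace ℝ E]

def colorfulHull (f : ι → κ → E) (c : ι → κ) : Set E :=
  convexHull ℝ (range fun i => f i (c i))

theorem exists_isMinOn_norm_colorfulHull [Finite ι] [Nonempty ι] [Finite κ] [Nonempty κ]
    (f : ι → κ → E) : ∃ c, ∃ x ∈ colorfulHull f c, ∀ c', IsMinOn (‖·‖) (colorfulHull f c') x := by
  have hcompact : IsCompact (⋃ c, colorfulHull f c) :=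
    isCompact_iUnion fun c => (finite_range _).isCompact_convexHull ℝ
  have hne : (⋃ c, colorfulHull f c).Nonempty :=
    ⟨_, mem_iUnion.mpr ⟨Classical.arbitrary _,
      subset_convexHull ℝ _ (mem_range_self (Classical.arbitrary ι))⟩⟩
  obtain ⟨x, hx, hmin⟩ := hcompact.exists_isMinOn hne continuous_norm.continuousOn
  obtain ⟨c, hxc⟩ := mem_iUnion.mp hx
  exact ⟨c, x, hxc, fun c' => hmin.on_subset (subset_iUnion _ c')⟩

theorem eq_zero_of_mem_convexHull_image_ne {f : ι → κ → E}
    (hf : ∀ i, (0 : E) ∈ convexHull ℝ (range (f i))) {c : ι → κ} {x : E}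
    (hmin : ∀ c', IsMinOn (‖·‖) (colorfulHull f c') x) {i₀ : ι}
    (hx : x ∈ convexHull ℝ ((fun i => f i (c i)) '' {i | i ≠ i₀})) : x = 0 := by
  classical
  obtain ⟨j, hj⟩ := exists_inner_nonpos_of_zero_mem_convexHull (hf i₀) x
  set c' := Function.update c i₀ j
  have hsub : (fun i => f i (c i)) '' {i | i ≠ i₀} ⊆ range fun i => f i (c' i) := by
    rintro _ ⟨i, hi, rfl⟩
    exact ⟨i, by simp [c', Function.update_of_ne hi]⟩
  have hxc' : x ∈ colorfulHull f c' := convexHull_mono hsub hx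
  have hjc' : f i₀ j ∈ colorfulHull f c' := subset_convexHull ℝ _ ⟨i₀, by simp [c']⟩
  have hsq : ‖x‖ ^ 2 ≤ 0 := ((hmin c').norm_sq_le_inner (convex_convexHull ℝ _) hxc' hjc').trans hj
  simpa using hsq

theorem exists_zero_mem_colorfulHull [FiniteDimensional ℝ E] [Fintype ι] [Finite κ]
    (hι : finrank ℝ E + 1 ≤ Fintype.card ι) (f : ι → κ → E)
    (hf : ∀ i, (0 : E) ∈ convexHull ℝ (range (f i))) : ∃ c, (0 : E) ∈ colorfulHull f c := by
  have : Nonempty ι := Fintype.card_pos_iff.mp (by omega)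
  have : Nonempty κ :=
    range_nonempty_iff_nonempty.mp (convexHull_nonempty_iff.mp ⟨0, hf (Classical.arbitrary ι)⟩)
  obtain ⟨c, x, hxc, hmin⟩ := exists_isMinOn_norm_colorfulHull f
  suffices x = 0 from ⟨c, this ▸ hxc⟩
  by_contra hx0
  have hint := mem_interior_convexHull_of_forall_notMem_convexHull_image_ne hι hxc
    fun i₀ hx => hx0 (eq_zero_of_mem_convexHull_image_ne hf hmin hx)
  exact hx0 (eq_zero_of_isMinOn_norm_of_mem_interior (hmin c) hint)

end Colorful

section Sarkaria

variable {ι : Type*} {s d : ℕ}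

/-- `simplexVertex s j = e_j` for `j < s` and `simplexVertex s s = -∑ e_k`: vertices of a simplex
in `ℝ^s` centred at `0`, whose only linear relations are the multiples of their sum. -/
def simplexVertex (s : ℕ) (j : Fin (s + 1)) (k : Fin s) : ℝ :=
  (if j = k.castSucc then 1 else 0) - (if j = Fin.last s then 1 else 0)

theorem sum_simplexVertex_mul (W : Fin (s + 1) → ℝ) (k : Fin s) :
    ∑ j, simplexVertex s j k * W j = W k.castSucc - W (Fin.last s) := by
  simp [simplexVertex, sub_mul, Finset.sum_sub_distrib]

theorem eq_last_of_sum_simplexVertex_mul_eq_zero {W : Fin (s + 1) → ℝ}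
    (h : ∀ k, ∑ j, simplexVertex s j k * W j = 0) (j : Fin (s + 1)) : W j = W (Fin.last s) := by
  induction j using Fin.lastCases with
  | last => rfl
  | cast k => linarith [sum_simplexVertex_mul W k, h k]

def homogenize (x : Fin d → ℝ) : Option (Fin d) → ℝ := fun o => o.elim 1 x

/-- `v_j ⊗ (x, 1)` for `v_j = simplexVertex s j`, where `ℝ^s ⊗ ℝ^(d+1)` is modelled on
`Fin s × Option (Fin d)` and the coordinate `none` carries the `1`. -/
def sarkariaLift (s : ℕ) (x : Fin d → ℝ) (j : Fin (s + 1)) :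
    EuclideanSpace ℝ (Fin s × Option (Fin d)) :=
  WithLp.toLp 2 fun ko => simplexVertex s j ko.1 * homogenize x ko.2

theorem sum_sarkariaLift (x : Fin d → ℝ) : ∑ j, sarkariaLift s x j = 0 := by
  ext ko
  simpa [sarkariaLift, ← Finset.sum_mul] using
    congr_arg (· * homogenize x ko.2) (sum_simplexVertex_mul (fun _ => 1) ko.1)

theorem fiberwise_sum_eq_of_sum_smul_sarkariaLift_eq_zero [Fintype ι] {c : ι → Fin (s + 1)}
    {w : ι → ℝ} {f : ι → Fin d → ℝ} (h : ∑ i, w i • sarkariaLift s (f i) (c i) = 0)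
    (j : Fin (s + 1)) :
    ∑ i with c i = j, w i • homogenize (f i) =
      ∑ i with c i = Fin.last s, w i • homogenize (f i) := by
  funext o
  refine eq_last_of_sum_simplexVertex_mul_eq_zero
    (W := fun j => (∑ i with c i = j, w i • homogenize (f i)) o) (fun k => ?_) j
  have hko := congr_arg (fun v => v (k, o)) h
  simp only [sarkariaLift, WithLp.ofLp_sum, WithLp.ofLp_smul, WithLp.ofLp_zero, Finset.sum_apply,
    Pi.smul_apply, Pi.zero_apply, smul_eq_mul] at hko
  rw [← hko, ← Finset.sum_fiberwise Finset.univ c]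
  refine Finset.sum_congr rfl fun j' _ => ?_
  rw [Finset.sum_apply, Finset.mul_sum]
  refine Finset.sum_congr rfl fun i hi => ?_
  rw [(Finset.mem_filter.mp hi).2, Pi.smul_apply, smul_eq_mul]
  ring

theorem exists_tverberg_partition [Fintype ι] (hι : Fintype.card ι = s * (d + 1) + 1)
    (f : ι → Fin d → ℝ) :
    ∃ c : ι → Fin (s + 1), (⋂ j, convexHull ℝ (f '' {i | c i = j})).Nonempty := by
  classical
  obtain ⟨c, hc⟩ := exists_zero_mem_colorfulHull (by simp [hι]) (fun i => sarkariaLift s (f i))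
    fun i => zero_mem_convexHull_range_of_sum_eq_zero (sum_sarkariaLift (f i))
  obtain ⟨w, hw0, hw1, hw⟩ := exists_weights_of_mem_convexHull_range hc
  set W := ∑ i with c i = Fin.last s, w i • homogenize (f i)
  have hfiber := fiberwise_sum_eq_of_sum_smul_sarkariaLift_eq_zero hw
  have hmass (j) : ∑ i with c i = j, w i = W none := by
    simpa [homogenize, W] using congr_fun (hfiber j) none
  have hmoment (j) : ∑ i with c i = j, w i • f i = fun t => W (some t) := by
    funext t
    simpa [homogenize, W] using congr_fun (hfiber j) (some t)
  have hW : ((s + 1 : ℕ) : ℝ) * W none = 1 := by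
    rw [← hw1, ← Finset.sum_fiberwise Finset.univ c w]
    simp [hmass]
  exact ⟨c, _, inv_smul_mem_iInter_convexHull_of_fiberwise_sums_eq c hw0 f
    (pos_of_mul_pos_right (hW ▸ one_pos) (by positivity)) hmass hmoment⟩

end Sarkaria

theorem tverberg_general (d r : ℕ) (hr : 2 ≤ r)
    (f : Fin ((r - 1) * (d + 1) + 1) → (Fin d → ℝ)) :
    ∃ c : Fin ((r - 1) * (d + 1) + 1) → Fin r,
      (⋂ j : Fin r, convexHull ℝ (f '' {i | c i = j})).Nonempty := by
  obtain ⟨s, rfl⟩ : ∃ s, r = s + 1 := ⟨r - 1, by omega⟩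
  exact exists_tverberg_partition (by simp) f

/-- Tverberg's theorem: any family of (r-1)(d+1)+1 points in ℝ^d (with repetitions
allowed) admits a partition of the index set into r parts whose convex hulls have a
common point. -/
theorem tverberg (d r : ℕ) (hd : 1 ≤ d) (hr : 2 ≤ r)
    (f : Fin ((r - 1) * (d + 1) + 1) → (Fin d → ℝ)) :
    ∃ c : Fin ((r - 1) * (d + 1) + 1) → Fin r,
      (⋂ j : Fin r, convexHull ℝ (f '' {i | c i = j})).Nonempty :=
  tverberg_general d r hr f
end

section
/- For any set X of n points in R^d, there exists a point p in R^d such that every closed half-space containing p contains at least ceil(n/(d+1)) points of X. -/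
/-!
The points `f i` indexed by a set `S` whose complement has fewer than `r` elements are "deep":
if `(d + 1) * (r - 1) < n`, then any `d + 1` such sets share an index, so by Helly's theorem
the convex hulls of the deep point sets have a common point `p`. A closed half-space through `p`
whose complement contained more than `n - r` of the points would leave `p` outside the hull of
those points, which are deep; hence every such half-space contains at least `r` points.
-/

open Finset Module

theorem Finset.exists_forall_mem_of_sum_card_compl_lt {α : Type*} [Fintype α] [DecidableEq α]
    (I : Finset (Finset α)) (h : ∑ S ∈ I, #Sᶜ < Fintype.card α) :
    ∃ a, ∀ S ∈ I, a ∈ S := by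
  by_contra! hnot
  have hcover : I.biUnion (fun S => Sᶜ) = univ := by
    ext a
    simpa using hnot a
  have := card_biUnion_le (s := I) (t := fun S => Sᶜ)
  rw [hcover, card_univ] at this
  omega

theorem Nat.mul_ceil_div_sub_one_lt {K : Type*} [Field K] [LinearOrder K] [IsStrictOrderedRing K]
    [FloorSemiring K] {m n : ℕ} (hm : 0 < m) (hn : 0 < n) :
    m * (⌈(n : K) / m⌉₊ - 1) < n := by
  have hceil_pos : 1 ≤ ⌈(n : K) / m⌉₊ := Nat.one_le_ceil_iff.mpr (by positivity)
  have hceil : (⌈(n : K) / m⌉₊ : K) < n / m + 1 := Nat.ceil_lt_add_one (by positivity)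
  rw [← Nat.cast_lt (α := K)]
  push_cast [Nat.cast_sub hceil_pos]
  calc (m : K) * ((⌈(n : K) / m⌉₊ : K) - 1) < m * (n / m) := by gcongr; linarith
    _ = n := by field_simp

section Centerpoint

variable {𝕜 E ι : Type*} [Field 𝕜] [LinearOrder 𝕜] [IsStrictOrderedRing 𝕜]
  [AddCommGroup E] [Module 𝕜 E] [FiniteDimensional 𝕜 E] [Fintype ι] [DecidableEq ι]

theorem exists_forall_mem_convexHull_of_card_compl_lt (f : ι → E) {r : ℕ}
    (hr : (finrank 𝕜 E + 1) * (r - 1) < Fintype.card ι) :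
    ∃ p, ∀ S : Finset ι, #Sᶜ < r → p ∈ convexHull 𝕜 (f '' S) := by
  have hdeep : ∀ I ⊆ univ.filter (fun S : Finset ι => #Sᶜ < r), #I ≤ finrank 𝕜 E + 1 →
      (⋂ S ∈ I, convexHull 𝕜 (f '' S)).Nonempty := by
    intro I hI hIcard
    have hsum : ∑ S ∈ I, #Sᶜ < Fintype.card ι := by
      calc ∑ S ∈ I, #Sᶜ ≤ ∑ _S ∈ I, (r - 1) :=
            sum_le_sum fun S hS => Nat.le_sub_one_of_lt (mem_filter.mp (hI hS)).2
        _ = #I * (r - 1) := by rw [sum_const, smul_eq_mul]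
        _ ≤ (finrank 𝕜 E + 1) * (r - 1) := Nat.mul_le_mul_right _ hIcard
        _ < Fintype.card ι := hr
    obtain ⟨i, hi⟩ := exists_forall_mem_of_sum_card_compl_lt I hsum
    exact ⟨f i, Set.mem_iInter₂.mpr fun S hS =>
      subset_convexHull 𝕜 _ ⟨i, hi S hS, rfl⟩⟩
  obtain ⟨p, hp⟩ := Convex.helly_theorem' (fun S _ => convex_convexHull 𝕜 _) hdeep
  exact ⟨p, fun S hS => Set.mem_iInter₂.mp hp S (mem_filter.mpr ⟨mem_univ S, hS⟩)⟩

theorem exists_le_card_halfSpace_of_mul_sub_one_lt (f : ι → E) {r : ℕ}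
    (hr : (finrank 𝕜 E + 1) * (r - 1) < Fintype.card ι) :
    ∃ p, ∀ (ℓ : E →ₗ[𝕜] 𝕜) (b : 𝕜), b ≤ ℓ p → r ≤ #(univ.filter fun i => b ≤ ℓ (f i)) := by
  obtain ⟨p, hp⟩ := exists_forall_mem_convexHull_of_card_compl_lt f hr
  refine ⟨p, fun ℓ b hb => ?_⟩
  by_contra! hfew
  set S := univ.filter fun i => ¬ b ≤ ℓ (f i)
  have hS : #Sᶜ < r := by simpa [S, compl_filter] using hfew
  have hsub : f '' S ⊆ {x | ℓ x < b} := by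
    rintro _ ⟨i, hi, rfl⟩
    exact lt_of_not_ge (mem_filter.mp hi).2
  have := convexHull_min hsub (convex_halfSpace_lt ℓ.isLinear b) (hp S hS)
  exact (this.trans_le hb).false

end Centerpoint

/-- Rado's centerpoint theorem: for any n points in ℝ^d (a finite multiset, given as an
indexed family), there is a point p such that every closed half-space containing p
contains at least ⌈n/(d+1)⌉ of the points. -/
theorem centerpoint (d n : ℕ) (f : Fin n → (Fin d → ℝ)) :
    ∃ p : Fin d → ℝ, ∀ a : Fin d → ℝ, a ≠ 0 → ∀ b : ℝ,
      b ≤ ∑ k, a k * p k →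
      ⌈(n : ℚ) / (d + 1)⌉₊ ≤ (Finset.univ.filter
        (fun i : Fin n => b ≤ ∑ k, a k * f i k)).card := by
  rcases Nat.eq_zero_or_pos n with rfl | hn
  · exact ⟨0, fun _ _ _ _ => by simp⟩
  have hr : (finrank ℝ (Fin d → ℝ) + 1) * (⌈(n : ℚ) / (d + 1)⌉₊ - 1) < Fintype.card (Fin n) := by
    simpa using Nat.mul_ceil_div_sub_one_lt (K := ℚ) (Nat.succ_pos d) hn
  obtain ⟨p, hp⟩ := exists_le_card_halfSpace_of_mul_sub_one_lt f hr
  exact ⟨p, fun a _ b hb => hp (dotProductBilin ℝ ℝ a) b hb⟩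
end

section
/- Given d+1 sets A_1, ..., A_{d+1} in R^d and a point a lying in the convex hull of each A_i, there exist points a_i in A_i (one from each set) such that a lies in the convex hull of {a_1, ..., a_{d+1}}. -/
open Metric Finset Module
open scoped RealInnerProductSpace

/-! Bárány's argument. Shrink each `A i` to a finite `B i` with `a ∈ conv (B i)` and, among the
finitely many transversals of the `B i`, take one whose hull is nearest to `a`; suppose `a` is not
in it, and let `x` be the point of the hull nearest to `a`. The hyperplane through `x` orthogonal
to `a - x` supports the hull, so by Carathéodory `x` is a convex combination of at most
`d` points of the transversal, and one colour `i₀` is not needed. As `a ∈ conv (B i₀)`, some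
`p ∈ B i₀` lies strictly on the side of `a`; replacing the `i₀`-th point by `p` keeps `x` in the
hull and adds the segment `[x, p]`, which comes strictly closer to `a`. -/

theorem AffineIndependent.card_le_finrank_of_apply_eq {𝕜 E ι : Type*} [Field 𝕜] [AddCommGroup E]
    [Module 𝕜 E] [FiniteDimensional 𝕜 E] [Fintype ι]
    {f : Module.Dual 𝕜 E} (hf : f ≠ 0) {z : ι → E} (hz : AffineIndependent 𝕜 z) {c : 𝕜}
    (hc : ∀ i, f (z i) = c) : Fintype.card ι ≤ finrank 𝕜 E := by
  cases isEmpty_or_nonempty ι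
  · simp
  have hspan : vectorSpan 𝕜 (Set.range z) ≤ LinearMap.ker f := by
    rw [vectorSpan_def, Submodule.span_le]
    rintro _ ⟨_, ⟨i, rfl⟩, _, ⟨j, rfl⟩, rfl⟩
    simp [hc]
  rw [← hz.finrank_vectorSpan_add_one, ← f.finrank_ker_add_one_of_ne_zero hf]
  exact Nat.add_le_add_right (Submodule.finrank_mono hspan) 1

section LinearOrderedField

variable {𝕜 E ι : Type*} [Field 𝕜] [LinearOrder 𝕜] [IsStrictOrderedRing 𝕜]
  [AddCommGroup E] [Module 𝕜 E]

theorem apply_eq_of_sum_smul_eq_of_apply_le [Fintype ι] (f : E →ₗ[𝕜] 𝕜) {z : ι → E}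
    {w : ι → 𝕜} {x : E} (hw₀ : ∀ i, 0 < w i) (hw₁ : ∑ i, w i = 1) (hx : ∑ i, w i • z i = x)
    (hle : ∀ i, f (z i) ≤ f x) (i : ι) : f (z i) = f x := by
  have hsum : ∑ j, w j * (f (z j) - f x) = 0 :=
    calc ∑ j, w j * (f (z j) - f x) = f (∑ j, w j • z j) - (∑ j, w j) * f x := by
          simp [mul_sub, sum_mul]
      _ = 0 := by rw [hx, hw₁, one_mul, sub_self]
  have hterm := (sum_eq_zero_iff_of_nonpos fun j _ ↦
    mul_nonpos_of_nonneg_of_nonpos (hw₀ j).le (sub_nonpos.2 (hle j))).1 hsum i (mem_univ i)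
  exact sub_eq_zero.1 ((mul_eq_zero.1 hterm).resolve_left (hw₀ i).ne')

theorem exists_finset_card_le_finrank_mem_convexHull [FiniteDimensional 𝕜 E] {s : Set E}
    {x : E} (hx : x ∈ convexHull 𝕜 s) {f : Module.Dual 𝕜 E} (hf : f ≠ 0)
    (hle : ∀ y ∈ s, f y ≤ f x) :
    ∃ T : Finset E, ↑T ⊆ s ∧ #T ≤ finrank 𝕜 E ∧ x ∈ convexHull 𝕜 (T : Set E) := by
  classical
  obtain ⟨ι, _, z, w, hzs, hz, hw₀, hw₁, hzx⟩ := eq_pos_convex_span_of_mem_convexHull hx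
  have hface := apply_eq_of_sum_smul_eq_of_apply_le f hw₀ hw₁ hzx fun i ↦ hle _ (hzs ⟨i, rfl⟩)
  refine ⟨univ.image z, by simpa using hzs,
    card_image_le.trans (hz.card_le_finrank_of_apply_eq hf hface), ?_⟩
  exact mem_convexHull_of_exists_fintype w z (fun i ↦ (hw₀ i).le) hw₁ (by simp) hzx

end LinearOrderedField

theorem exists_subset_range_update {ι α : Type*} [Fintype ι] [DecidableEq ι] {t : ι → α}
    {T : Finset α} (hT : ↑T ⊆ Set.range t) (hcard : #T < Fintype.card ι) :
    ∃ i₀, ∀ p, (T : Set α) ⊆ Set.range (Function.update t i₀ p) := by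
  choose g hg using fun y : T ↦ hT y.2
  obtain ⟨i₀, -, hi₀⟩ := exists_mem_notMem_of_card_lt_card (s := univ.image g) (t := univ)
    (card_image_le.trans_lt (by simpa using hcard))
  refine ⟨i₀, fun p y hy ↦ ⟨g ⟨y, hy⟩, ?_⟩⟩
  have hne : g ⟨y, hy⟩ ≠ i₀ := fun h ↦ hi₀ (mem_image.2 ⟨_, mem_univ _, h⟩)
  rw [Function.update_of_ne hne, hg]

section InnerProductSpace

variable {E : Type*} [NormedAddCommGroup E] [InnerProductSpace ℝ E]

theorem exists_mem_segment_dist_lt_of_inner_pos {a x y : E} (h : 0 < ⟪a - x, y - x⟫) :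
    ∃ z ∈ segment ℝ x y, dist a z < dist a x := by
  set c := ⟪a - x, y - x⟫
  have hyx : 0 < ‖y - x‖ ^ 2 := by
    refine pow_pos (norm_pos_iff.2 fun hyx ↦ ?_) 2
    simp [c, hyx] at h
  -- moving by `θ • (y - x)` with `θ ≤ c / ‖y - x‖ ^ 2` lowers the squared distance by `≥ θ * c`
  set θ := min 1 (c / ‖y - x‖ ^ 2)
  have hθ : 0 < θ := lt_min one_pos (div_pos h hyx)
  have hθc : θ * ‖y - x‖ ^ 2 ≤ c := (le_div_iff₀ hyx).1 (min_le_right _ _)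
  refine ⟨x + θ • (y - x), segment_eq_image' ℝ x y ▸ ⟨θ, ⟨hθ.le, min_le_left _ _⟩, rfl⟩, ?_⟩
  have hsq : dist a (x + θ • (y - x)) ^ 2 < dist a x ^ 2 := by
    rw [dist_eq_norm, dist_eq_norm, sub_add_eq_sub_sub, norm_sub_sq_real, real_inner_smul_right,
      norm_smul, Real.norm_eq_abs, mul_pow, sq_abs]
    nlinarith [mul_pos hθ h]
  exact lt_of_pow_lt_pow_left₀ 2 dist_nonneg hsq

theorem infDist_lt_dist_of_inner_pos {K : Set E} (hK : Convex ℝ K) {a x y : E} (hx : x ∈ K)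
    (hy : y ∈ K) (h : 0 < ⟪a - x, y - x⟫) : infDist a K < dist a x := by
  obtain ⟨z, hz, hza⟩ := exists_mem_segment_dist_lt_of_inner_pos h
  exact (infDist_le_dist_of_mem (hK.segment_subset hx hy hz)).trans_lt hza

theorem inner_sub_nonpos_of_dist_eq_infDist {K : Set E} (hK : Convex ℝ K) {a x y : E}
    (hx : x ∈ K) (hxa : infDist a K = dist a x) (hy : y ∈ K) : ⟪a - x, y - x⟫ ≤ 0 :=
  not_lt.1 fun h ↦ (infDist_lt_dist_of_inner_pos hK hx hy h).ne hxa

theorem exists_inner_sub_pos_of_mem_convexHull {s : Set E} {a x : E}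
    (ha : a ∈ convexHull ℝ s) (hax : a ≠ x) : ∃ p ∈ s, 0 < ⟪a - x, p - x⟫ := by
  obtain ⟨p, hp, hap⟩ := ((innerₛₗ ℝ (a - x)).convexOn convex_univ).exists_ge_of_mem_convexHull
    (Set.subset_univ s) ha
  refine ⟨p, hp, ?_⟩
  have : 0 < ⟪a - x, a - x⟫ := real_inner_self_pos.2 (sub_ne_zero.2 hax)
  simp only [innerₛₗ_apply_apply, inner_sub_right] at hap this ⊢
  linarith

end InnerProductSpace

theorem colorful_caratheodory_of_finset {E ι : Type*} [NormedAddCommGroup E]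
    [InnerProductSpace ℝ E] [FiniteDimensional ℝ E] [Fintype ι] [DecidableEq ι]
    (hι : finrank ℝ E < Fintype.card ι) {B : ι → Finset E} {a : E}
    (ha : ∀ i, a ∈ convexHull ℝ (B i : Set E)) :
    ∃ t ∈ Fintype.piFinset B, a ∈ convexHull ℝ (Set.range t) := by
  have : Nonempty ι := Fintype.card_pos_iff.1 (Nat.zero_lt_of_lt hι)
  have hne : (Fintype.piFinset B).Nonempty :=
    Fintype.piFinset_nonempty.2 fun i ↦ convexHull_nonempty_iff.1 ⟨a, ha i⟩
  obtain ⟨t, ht, hmin⟩ := (Fintype.piFinset B).exists_min_image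
    (fun t ↦ infDist a (convexHull ℝ (Set.range t))) hne
  refine ⟨t, ht, by_contra fun haK ↦ ?_⟩
  obtain ⟨x, hxK, hxa⟩ := (Set.finite_range t).isCompact_convexHull (𝕜 := ℝ)
    |>.exists_infDist_eq_dist (convexHull_nonempty_iff.2 (Set.range_nonempty t)) a
  have hax : a ≠ x := fun h ↦ haK (h ▸ hxK)
  have hf : innerₛₗ ℝ (a - x) ≠ 0 := fun h ↦
    hax (sub_eq_zero.1 (inner_self_eq_zero.1 (LinearMap.congr_fun h (a - x))))
  have hle : ∀ y ∈ Set.range t, innerₛₗ ℝ (a - x) y ≤ innerₛₗ ℝ (a - x) x := fun y hy ↦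
    sub_nonpos.1 <| (inner_sub_right _ _ _).symm.trans_le <| inner_sub_nonpos_of_dist_eq_infDist
      (convex_convexHull ℝ _) hxK hxa (subset_convexHull ℝ _ hy)
  obtain ⟨T, hTt, hTcard, hxT⟩ := exists_finset_card_le_finrank_mem_convexHull hxK hf hle
  obtain ⟨i₀, hi₀⟩ := exists_subset_range_update hTt (hTcard.trans_lt hι)
  obtain ⟨p, hpB, hp⟩ := exists_inner_sub_pos_of_mem_convexHull (ha i₀) hax
  have hcloser : infDist a (convexHull ℝ (Set.range (Function.update t i₀ p))) <
      infDist a (convexHull ℝ (Set.range t)) :=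
    hxa ▸ infDist_lt_dist_of_inner_pos (convex_convexHull ℝ _)
      (convexHull_mono (hi₀ p) hxT) (subset_convexHull ℝ _ ⟨i₀, Function.update_self ..⟩) hp
  refine (hmin _ (Fintype.mem_piFinset.2 fun i ↦ ?_)).not_gt hcloser
  rcases eq_or_ne i i₀ with rfl | hi
  · simpa using hpB
  · simpa [Function.update_of_ne hi] using Fintype.mem_piFinset.1 ht i

theorem colorful_caratheodory_of_finrank_lt {V ι : Type*} [AddCommGroup V] [Module ℝ V]
    [FiniteDimensional ℝ V] [Fintype ι] (hι : finrank ℝ V < Fintype.card ι) (A : ι → Set V)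
    {a : V} (ha : ∀ i, a ∈ convexHull ℝ (A i)) :
    ∃ t : ι → V, (∀ i, t i ∈ A i) ∧ a ∈ convexHull ℝ (Set.range t) := by
  classical
  let E := EuclideanSpace ℝ (Fin (finrank ℝ V))
  let e : V ≃ₗ[ℝ] E := LinearEquiv.ofFinrankEq _ _ (by simp [E])
  have hfin : ∀ i, ∃ B : Finset E, ↑B ⊆ e '' A i ∧ e a ∈ convexHull ℝ (B : Set E) := fun i ↦ by
    have hea : e a ∈ convexHull ℝ (e '' A i) :=
      e.toLinearMap.image_convexHull (A i) ▸ Set.mem_image_of_mem e (ha i)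
    rw [convexHull_eq_union_convexHull_finite_subsets] at hea
    simpa only [Set.mem_iUnion, exists_prop] using hea
  choose B hBA haB using hfin
  obtain ⟨t, ht, hat⟩ := colorful_caratheodory_of_finset (e.finrank_eq ▸ hι) haB
  refine ⟨e.symm ∘ t, fun i ↦ ?_, ?_⟩
  · obtain ⟨y, hy, hyt⟩ := hBA i (Fintype.mem_piFinset.1 ht i)
    simpa [← hyt] using hy
  · have := e.symm.toLinearMap.image_convexHull (Set.range t) ▸ Set.mem_image_of_mem e.symm hat
    simpa [Set.range_comp] using this

/-- Colorful Carathéodory theorem (Bárány): if a point a lies in the convex hull of each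
of d+1 sets A_1, ..., A_{d+1} ⊆ ℝ^d, then there is a transversal a_i ∈ A_i with
a ∈ conv{a_1, ..., a_{d+1}}. -/
theorem colorful_caratheodory (d : ℕ) (A : Fin (d + 1) → Set (Fin d → ℝ))
    (a : Fin d → ℝ) (ha : ∀ i, a ∈ convexHull ℝ (A i)) :
    ∃ t : Fin (d + 1) → (Fin d → ℝ), (∀ i, t i ∈ A i) ∧
      a ∈ convexHull ℝ (Set.range t) :=
  colorful_caratheodory_of_finrank_lt (by simp) A ha
end

section
/- Given d+1 pairs of points F_1, ..., F_{d+1} in R^d, one can choose one point from each pair, forming a set A, so that the set B of the remaining points satisfies: the convex hull of A and the convex hull of B intersect. Moreover, the intersection can be witnessed with equal convex coefficients: there exist nonnegative alpha_1, ..., alpha_{d+1} summing to 1 with sum_i alpha_i x_i = sum_i alpha_i y_i where F_i = {x_i, y_i} after suitable labeling. -/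
/-!
The d + 1 differences `x i - y i` live in a d-dimensional space, so they satisfy a nontrivial
linear relation `∑ g i • (x i - y i) = 0`. Putting `x i` on the first side exactly when
`g i ≥ 0`, the relation reads `∑ |g i| • pᵢ = ∑ |g i| • qᵢ` for the two sides `p`, `q`, and
normalising `|g|` to total mass one gives common convex weights for both sides.
-/

section

variable {𝕜 E : Type*} [Field 𝕜] [LinearOrder 𝕜] [IsStrictOrderedRing 𝕜]
  [AddCommGroup E] [Module 𝕜 E]

lemma abs_smul_ite_sub_ite (t : 𝕜) (a b : E) :
    |t| • ((if 0 ≤ t then a else b) - (if 0 ≤ t then b else a)) = t • (a - b) := by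
  by_cases ht : 0 ≤ t
  · simp only [ht, if_true, abs_of_nonneg ht]
  · simp only [ht, if_false, abs_of_neg (not_le.mp ht), neg_smul, ← smul_neg, neg_sub]

theorem exists_common_convex_weights_of_sum_smul_sub_eq_zero {ι : Type*} [Fintype ι]
    (x y : ι → E) {g : ι → 𝕜} (hg : g ≠ 0) (hrel : ∑ i, g i • (x i - y i) = 0) :
    ∃ σ : ι → Bool, ∃ α : ι → 𝕜, (∀ i, 0 ≤ α i) ∧ ∑ i, α i = 1 ∧
      ∑ i, α i • (if σ i then x i else y i) = ∑ i, α i • (if σ i then y i else x i) := by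
  obtain ⟨i₀, hi₀⟩ := Function.ne_iff.mp hg
  set S := ∑ i, |g i|
  have hS : 0 < S :=
    Finset.sum_pos' (fun i _ => abs_nonneg (g i)) ⟨i₀, Finset.mem_univ _, abs_pos.mpr hi₀⟩
  refine ⟨fun i => decide (0 ≤ g i), fun i => S⁻¹ * |g i|,
    fun i => by positivity, by rw [← Finset.mul_sum, inv_mul_cancel₀ hS.ne'], ?_⟩
  rw [← sub_eq_zero, ← Finset.sum_sub_distrib]
  calc ∑ i, ((S⁻¹ * |g i|) • (if decide (0 ≤ g i) then x i else y i) -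
          (S⁻¹ * |g i|) • (if decide (0 ≤ g i) then y i else x i))
      = S⁻¹ • ∑ i, g i • (x i - y i) := by
        simp only [Finset.smul_sum, mul_smul, ← smul_sub, decide_eq_true_eq,
          abs_smul_ite_sub_ite]
    _ = 0 := by rw [hrel, smul_zero]

theorem exists_common_convex_weights_of_finrank_lt_card {ι : Type*} [Fintype ι]
    [FiniteDimensional 𝕜 E] (x y : ι → E) (hcard : Module.finrank 𝕜 E < Fintype.card ι) :
    ∃ σ : ι → Bool, ∃ α : ι → 𝕜, (∀ i, 0 ≤ α i) ∧ ∑ i, α i = 1 ∧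
      ∑ i, α i • (if σ i then x i else y i) = ∑ i, α i • (if σ i then y i else x i) := by
  have hdep : ¬LinearIndependent 𝕜 (fun i => x i - y i) :=
    fun h => hcard.not_ge h.fintype_card_le_finrank
  obtain ⟨g, hrel, i₀, hi₀⟩ := Fintype.not_linearIndependent_iff.mp hdep
  exact exists_common_convex_weights_of_sum_smul_sub_eq_zero x y
    (Function.ne_iff.mpr ⟨i₀, hi₀⟩) hrel

end

/-- Colorful Radon theorem with equal coefficients: given d+1 pairs of points
F_i = {x i, y i} in ℝ^d, one can relabel each pair (choose σ i : Bool) so that the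
convex hulls of the chosen points and of the remaining points intersect; moreover the
intersection is witnessed by the same convex coefficients on both sides. -/
theorem colorful_radon_equal_coefficients (d : ℕ) (x y : Fin (d + 1) → (Fin d → ℝ)) :
    ∃ σ : Fin (d + 1) → Bool,
      ((convexHull ℝ (Set.range (fun i => if σ i then x i else y i))) ∩
        (convexHull ℝ (Set.range (fun i => if σ i then y i else x i)))).Nonempty ∧
      ∃ α : Fin (d + 1) → ℝ, (∀ i, 0 ≤ α i) ∧ (∑ i, α i = 1) ∧
        (∑ i, α i • (if σ i then x i else y i)) =
          (∑ i, α i • (if σ i then y i else x i)) := by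
  obtain ⟨σ, α, hα₀, hα₁, hsum⟩ :=
    exists_common_convex_weights_of_finrank_lt_card (𝕜 := ℝ) x y (by simp)
  have hmem (f : Fin (d + 1) → Fin d → ℝ) : ∑ i, α i • f i ∈ convexHull ℝ (Set.range f) :=
    (convex_convexHull ℝ _).sum_mem (fun i _ => hα₀ i) hα₁
      (fun i _ => subset_convexHull ℝ _ (Set.mem_range_self i))
  exact ⟨σ, ⟨_, hmem _, hsum ▸ hmem _⟩, α, hα₀, hα₁, hsum⟩
end

section
/- Let v_1, ..., v_r in R^{r-1} be vectors whose only linear dependences are scalar multiples of v_1 + ... + v_r = 0. Let X_1, ..., X_r be finite disjoint sets in R^d, and for x in X_j define the tensor x-bar = v_j tensor (x,1) in R^{(r-1)(d+1)}. Then the intersection of the convex hulls of X_1, ..., X_r is nonempty if and only if the origin lies in the convex hull of the set of all tensors x-bar. -/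
/-!
For weights `w j x ≥ 0` on the points of the `X j`, put `y j = ∑_{x ∈ X j} w j x • (x, 1)`.
Then `∑ w j x • x̄ = ∑_j v_j ⊗ y_j`, which vanishes exactly when all `y_j` are equal, because
the only linear relations among the `v_j` are multiples of `∑ v_j = 0`. The last coordinate of
`y_j` is the total weight on `X j`; so if the weights form a convex combination, the common value
of the `y_j` is `r⁻¹ • (p, 1)` with `p` the centre of mass of every `w j`, a point of every hull.
Conversely a common point `p` yields `y_j = r⁻¹ • (p, 1)` for all `j`.
-/

/-- The lift of x ∈ ℝ^d to (x, 1) ∈ ℝ^{d+1}. -/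
def liftOne (d : ℕ) (x : Fin d → ℝ) : Fin (d + 1) → ℝ :=
  fun k => if h : (k : ℕ) < d then x ⟨k, h⟩ else 1

/-- The Sarkaria tensor v_j ⊗ (x, 1), viewed as a vector in ℝ^{(r-1)(d+1)} indexed by
pairs. -/
def sarkariaTensor (d r : ℕ) (v : Fin r → (Fin (r - 1) → ℝ)) (j : Fin r)
    (x : Fin d → ℝ) : Fin (r - 1) × Fin (d + 1) → ℝ :=
  fun p => v j p.1 * liftOne d x p.2

open Finset

section ConvexCombination

variable {𝕜 E : Type*} [Field 𝕜] [LinearOrder 𝕜] [IsStrictOrderedRing 𝕜] [AddCommGroup E]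
  [Module 𝕜 E]

theorem Finset.mem_convexHull_image_iff {ι : Type*} (t : Finset ι) (g : ι → E) {z : E} :
    z ∈ convexHull 𝕜 (g '' t) ↔
      ∃ w : ι → 𝕜, (∀ i ∈ t, 0 ≤ w i) ∧ ∑ i ∈ t, w i = 1 ∧ ∑ i ∈ t, w i • g i = z := by
  classical
  constructor
  · refine fun hz => convexHull_min (t := {z | ∃ w : ι → 𝕜, (∀ i ∈ t, 0 ≤ w i) ∧
      ∑ i ∈ t, w i = 1 ∧ ∑ i ∈ t, w i • g i = z}) ?_ ?_ hz
    · rintro _ ⟨i, hi, rfl⟩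
      refine ⟨fun k => if k = i then 1 else 0, fun k _ => by positivity, ?_, ?_⟩ <;>
        simp [mem_coe.1 hi]
    · rintro _ ⟨w₁, hw₁, hs₁, rfl⟩ _ ⟨w₂, hw₂, hs₂, rfl⟩ a b ha hb hab
      refine ⟨a • w₁ + b • w₂, fun i hi => ?_, ?_, ?_⟩
      · have := hw₁ i hi
        have := hw₂ i hi
        simp only [Pi.add_apply, Pi.smul_apply, smul_eq_mul]
        positivity
      · simp [sum_add_distrib, ← mul_sum, hs₁, hs₂, hab]
      · simp [add_smul, mul_smul, sum_add_distrib, smul_sum]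
  · rintro ⟨w, hw₀, hw₁, rfl⟩
    rw [← t.centerMass_eq_of_sum_1 _ hw₁]
    exact t.centerMass_mem_convexHull hw₀ (hw₁ ▸ zero_lt_one) fun i hi => ⟨i, hi, rfl⟩

theorem mem_convexHull_setOf_exists_mem_iff {ι P : Type*} [Fintype ι] (X : ι → Finset P)
    (F : ι → P → E) {z : E} :
    z ∈ convexHull 𝕜 {t | ∃ j, ∃ x ∈ X j, t = F j x} ↔
      ∃ w : ι → P → 𝕜, (∀ j, ∀ x ∈ X j, 0 ≤ w j x) ∧ ∑ j, ∑ x ∈ X j, w j x = 1 ∧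
        ∑ j, ∑ x ∈ X j, w j x • F j x = z := by
  have hS : {t | ∃ j, ∃ x ∈ X j, t = F j x} =
      (fun q : (_ : ι) × P => F q.1 q.2) '' (univ.sigma X : Finset ((_ : ι) × P)) := by
    ext t
    simp [eq_comm]
  rw [hS, Finset.mem_convexHull_image_iff]
  constructor
  · rintro ⟨W, hW₀, hW₁, hW⟩
    refine ⟨fun j x => W ⟨j, x⟩, fun j x hx => hW₀ _ (mem_sigma.2 ⟨mem_univ j, hx⟩), ?_, ?_⟩
    · rwa [sum_sigma] at hW₁
    · rwa [sum_sigma] at hW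
  · rintro ⟨w, hw₀, hw₁, hw⟩
    refine ⟨fun q => w q.1 q.2, fun q hq => hw₀ _ _ (mem_sigma.1 hq).2, ?_, ?_⟩
    · rwa [sum_sigma]
    · rwa [sum_sigma]

end ConvexCombination

theorem sum_tensor_eq_zero_iff_forall_eq {R ι α β : Type*} [CommSemiring R] [Fintype ι]
    {v : ι → α → R} (hsum : ∑ j, v j = 0)
    (hdep : ∀ c : ι → R, ∑ j, c j • v j = 0 → ∀ j k, c j = c k) (y : ι → β → R) :
    ∑ j, (fun p : α × β => v j p.1 * y j p.2) = 0 ↔ ∀ j k, y j = y k := by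
  constructor
  · intro h j k
    funext m
    refine hdep (fun j => y j m) ?_ j k
    funext q
    simpa [Finset.sum_apply, mul_comm] using congrFun h (q, m)
  · intro h
    obtain _ | ⟨⟨j₀⟩⟩ := isEmpty_or_nonempty ι
    · simp
    funext p
    have hsum_p : ∑ j, v j p.1 = 0 := by simpa [Finset.sum_apply] using congrFun hsum p.1
    simp [Finset.sum_apply, h _ j₀, ← Finset.sum_mul, hsum_p]

section liftOne

variable {d : ℕ}

@[simp]
theorem liftOne_last (x : Fin d → ℝ) : liftOne d x (Fin.last d) = 1 := by
  simp [liftOne]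

@[simp]
theorem liftOne_castSucc (x : Fin d → ℝ) (m : Fin d) : liftOne d x m.castSucc = x m := by
  simp [liftOne]

theorem liftOne_injective : Function.Injective (liftOne d) :=
  fun x y h => funext fun m => by simpa using congrFun h m.castSucc

theorem sum_smul_liftOne_last {ι : Type*} (s : Finset ι) (w : ι → ℝ) (z : ι → Fin d → ℝ) :
    (∑ i ∈ s, w i • liftOne d (z i)) (Fin.last d) = ∑ i ∈ s, w i := by
  simp [Finset.sum_apply]

theorem sum_eq_of_sum_smul_liftOne_eq_smul {ι : Type*} {s : Finset ι} {w : ι → ℝ}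
    {z : ι → Fin d → ℝ} {c : ℝ} {p : Fin d → ℝ}
    (h : ∑ i ∈ s, w i • liftOne d (z i) = c • liftOne d p) : ∑ i ∈ s, w i = c := by
  simpa using congrFun h (Fin.last d)

theorem sum_smul_liftOne {ι : Type*} {s : Finset ι} {w : ι → ℝ} (hw : ∑ i ∈ s, w i ≠ 0)
    (z : ι → Fin d → ℝ) :
    ∑ i ∈ s, w i • liftOne d (z i) = (∑ i ∈ s, w i) • liftOne d (s.centerMass w z) := by
  funext k
  induction k using Fin.lastCases with
  | last => simp [Finset.sum_apply]
  | cast m => simp [Finset.sum_apply, centerMass, hw]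

theorem mem_convexHull_iff_exists_sum_smul_liftOne {X : Finset (Fin d → ℝ)} {p : Fin d → ℝ}
    {c : ℝ} (hc : 0 < c) :
    p ∈ convexHull ℝ (X : Set (Fin d → ℝ)) ↔
      ∃ w : (Fin d → ℝ) → ℝ, (∀ x ∈ X, 0 ≤ w x) ∧ ∑ x ∈ X, w x • liftOne d x = c • liftOne d p := by
  constructor
  · intro hp
    obtain ⟨w, hw₀, hw₁, rfl⟩ := Finset.mem_convexHull.1 hp
    refine ⟨c • w, fun x hx => mul_nonneg hc.le (hw₀ x hx), ?_⟩
    simp_rw [Pi.smul_apply, smul_assoc, ← smul_sum, sum_smul_liftOne (hw₁ ▸ one_ne_zero), hw₁,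
      one_smul]
    rfl
  · rintro ⟨w, hw₀, hw⟩
    have hmass := sum_eq_of_sum_smul_liftOne_eq_smul hw
    rw [sum_smul_liftOne (hmass ▸ hc.ne'), hmass] at hw
    rw [← liftOne_injective (smul_right_injective _ hc.ne' hw)]
    exact X.centerMass_id_mem_convexHull hw₀ (hmass ▸ hc)

end liftOne

theorem sum_smul_sarkariaTensor {d r : ℕ} (v : Fin r → Fin (r - 1) → ℝ) (j : Fin r)
    (s : Finset (Fin d → ℝ)) (w : (Fin d → ℝ) → ℝ) :
    ∑ x ∈ s, w x • sarkariaTensor d r v j x =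
      fun p => v j p.1 * (∑ x ∈ s, w x • liftOne d x) p.2 := by
  funext p
  simp [sarkariaTensor, Finset.sum_apply, Finset.mul_sum, mul_left_comm]

theorem sarkaria_criterion_general (d r : ℕ) (hr : 2 ≤ r)
    (v : Fin r → (Fin (r - 1) → ℝ))
    (hsum : ∑ j, v j = 0)
    (hdep : ∀ c : Fin r → ℝ, ∑ j, c j • v j = 0 → ∀ j k, c j = c k)
    (X : Fin r → Finset (Fin d → ℝ)) :
    (⋂ j, convexHull ℝ ((X j : Set (Fin d → ℝ)))).Nonempty ↔
      (0 : Fin (r - 1) × Fin (d + 1) → ℝ) ∈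
        convexHull ℝ {t | ∃ j, ∃ x ∈ X j, t = sarkariaTensor d r v j x} := by
  have hr₀ : (0 : ℝ) < r := by exact_mod_cast (show 0 < r by omega)
  simp_rw [mem_convexHull_setOf_exists_mem_iff, sum_smul_sarkariaTensor,
    sum_tensor_eq_zero_iff_forall_eq hsum hdep]
  constructor
  · rintro ⟨p, hp⟩
    choose w hw₀ hw using fun j =>
      (mem_convexHull_iff_exists_sum_smul_liftOne (inv_pos.2 hr₀)).1 (Set.mem_iInter.1 hp j)
    refine ⟨w, hw₀, ?_, fun j k => by rw [hw, hw]⟩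
    simp [fun j => sum_eq_of_sum_smul_liftOne_eq_smul (hw j), hr₀.ne']
  · rintro ⟨w, hw₀, hw₁, hy⟩
    let j₀ : Fin r := ⟨0, by omega⟩
    have hmass : ∀ j, ∑ x ∈ X j, w j x = (r : ℝ)⁻¹ := by
      have hconst : ∀ j, ∑ x ∈ X j, w j x = ∑ x ∈ X j₀, w j₀ x := fun j => by
        rw [← sum_smul_liftOne_last, ← sum_smul_liftOne_last, hy j j₀]
      simp only [hconst, sum_const, card_univ, Fintype.card_fin, nsmul_eq_mul] at hw₁ ⊢
      exact fun _ => eq_inv_of_mul_eq_one_right hw₁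
    refine ⟨(X j₀).centerMass (w j₀) id, Set.mem_iInter.2 fun j => ?_⟩
    refine (mem_convexHull_iff_exists_sum_smul_liftOne (inv_pos.2 hr₀)).2 ⟨w j, hw₀ j, ?_⟩
    rw [← hmass j₀, ← sum_smul_liftOne (by simp [hmass, hr₀.ne'])]
    exact hy j j₀

/-- Sarkaria's tensor criterion: with v_1, ..., v_r ∈ ℝ^{r-1} whose only linear
dependences are multiples of v_1 + ⋯ + v_r = 0, and finite pairwise disjoint sets
X_1, ..., X_r ⊆ ℝ^d, the convex hulls of the X_j have a common point iff the origin
lies in the convex hull of all tensors v_j ⊗ (x, 1), x ∈ X_j. -/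
theorem sarkaria_criterion (d r : ℕ) (hr : 2 ≤ r)
    (v : Fin r → (Fin (r - 1) → ℝ))
    (hsum : ∑ j, v j = 0)
    (hdep : ∀ c : Fin r → ℝ, ∑ j, c j • v j = 0 → ∀ j k, c j = c k)
    (X : Fin r → Finset (Fin d → ℝ))
    (hdisj : ∀ j k : Fin r, j ≠ k → Disjoint (X j) (X k)) :
    (⋂ j, convexHull ℝ ((X j : Set (Fin d → ℝ)))).Nonempty ↔
      (0 : Fin (r - 1) × Fin (d + 1) → ℝ) ∈
        convexHull ℝ {t | ∃ j, ∃ x ∈ X j, t = sarkariaTensor d r v j x} :=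
  sarkaria_criterion_general d r hr v hsum hdep X
end

section
/- The derivation of Tverberg's theorem from the colorful Carathéodory theorem via Sarkaria's tensor trick: given (r-1)(d+1)+1 points x_0, ..., x_n in R^d with n=(r-1)(d+1), and vectors v_1,...,v_r in R^{r-1} summing to 0 with every proper subset linearly independent, if for each i there is j(i) such that 0 is a convex combination of the tensors v_{j(i)} tensor (x_i,1), then the sets X_j = {x_i : j(i)=j} form a partition of the points with nonempty intersection of convex hulls. -/
/-- Any linear relation among vectors summing to zero, every proper subset of which is
linearly independent, has all coefficients equal. -/
lemma coeffs_eq_of_rel (r : ℕ) (v : Fin r → (Fin (r - 1) → ℝ))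
    (hsum : ∑ j, v j = 0)
    (hindep : ∀ s : Finset (Fin r), s ≠ Finset.univ →
      LinearIndependent ℝ (fun i : s => v i))
    (c : Fin r → ℝ) (hc : ∑ j', c j' • v j' = 0) (a b : Fin r) : c a = c b := by
  suffices h : ∀ j', c j' = c a by rw [h b]
  intro j'
  rcases eq_or_ne j' a with rfl | hne
  · rfl
  have hs0 : ∑ j'', (c j'' - c a) • v j'' = 0 := by
    have : ∑ j'', (c j'' - c a) • v j''
        = (∑ j'', c j'' • v j'') - c a • ∑ j'', v j'' := by
      rw [Finset.smul_sum, ← Finset.sum_sub_distrib]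
      exact Finset.sum_congr rfl fun i _ => by rw [sub_smul]
    rw [this, hc, hsum, smul_zero, sub_zero]
  set s : Finset (Fin r) := Finset.univ.erase a with hsdef
  have hsne : s ≠ Finset.univ := by
    intro h
    have : a ∈ s := h ▸ Finset.mem_univ a
    exact (Finset.notMem_erase a _) this
  have hli := hindep s hsne
  rw [Fintype.linearIndependent_iff] at hli
  have hsum_s : ∑ i : s, (c (i : Fin r) - c a) • v (i : Fin r) = 0 := by
    rw [Finset.sum_coe_sort s (fun i => (c i - c a) • v i)]
    rw [Finset.sum_erase _ (by rw [sub_self, zero_smul])]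
    exact hs0
  have := hli (fun i => c (i : Fin r) - c a) hsum_s
    ⟨j', Finset.mem_erase.mpr ⟨hne, Finset.mem_univ _⟩⟩
  linarith [sub_eq_zero.mp this]

/-- Derivation of Tverberg's theorem from colorful Carathéodory via Sarkaria's tensor
trick: if 0 is a convex combination of the tensors v_{j(i)} ⊗ (x_i, 1), where the
vectors v_1, ..., v_r ∈ ℝ^{r-1} sum to 0 and every proper subset of them is linearly
independent, then the parts X_j = {x_i : j(i) = j} form a Tverberg partition. -/
theorem tverberg_via_sarkaria (d r : ℕ) (hd : 1 ≤ d) (hr : 2 ≤ r)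
    (x : Fin ((r - 1) * (d + 1) + 1) → (Fin d → ℝ))
    (v : Fin r → (Fin (r - 1) → ℝ))
    (hsum : ∑ j, v j = 0)
    (hindep : ∀ s : Finset (Fin r), s ≠ Finset.univ →
      LinearIndependent ℝ (fun i : s => v i))
    (j : Fin ((r - 1) * (d + 1) + 1) → Fin r)
    (α : Fin ((r - 1) * (d + 1) + 1) → ℝ)
    (hα : ∀ i, 0 ≤ α i) (hα1 : ∑ i, α i = 1)
    (hzero : ∑ i, α i • sarkariaTensor d r v (j i) (x i) = 0) :
    (⋂ c : Fin r, convexHull ℝ (x '' {i | j i = c})).Nonempty := by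
  classical
  set T : Fin r → Finset (Fin ((r - 1) * (d + 1) + 1)) := fun c => Finset.univ.filter (fun i => j i = c) with hT
  set w : Fin r → (Fin (d + 1) → ℝ) :=
    fun c q => ∑ i ∈ T c, α i * liftOne d (x i) q with hwdef
  -- each coordinate q gives a linear relation among the v's
  have hw : ∀ q : Fin (d + 1), ∑ c, w c q • v c = 0 := by
    intro q
    funext p
    have h := congrFun hzero (p, q)
    simp only [Finset.sum_apply, Pi.smul_apply, Pi.zero_apply, smul_eq_mul,
      sarkariaTensor] at h
    simp only [Finset.sum_apply, Pi.smul_apply, Pi.zero_apply, smul_eq_mul, hwdef]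
    calc ∑ c, (∑ i ∈ T c, α i * liftOne d (x i) q) * v c p
        = ∑ c, ∑ i ∈ T c, α i * (v (j i) p * liftOne d (x i) q) := by
          refine Finset.sum_congr rfl fun c _ => ?_
          rw [Finset.sum_mul]
          refine Finset.sum_congr rfl fun i hi => ?_
          rw [(Finset.mem_filter.mp hi).2]; ring
      _ = ∑ i, α i * (v (j i) p * liftOne d (x i) q) := by
          rw [hT]
          rw [Finset.sum_fiberwise_eq_sum_filter Finset.univ Finset.univ j
            (fun i => α i * (v (j i) p * liftOne d (x i) q))]
          simp
      _ = 0 := h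
  have hconst : ∀ (q : Fin (d + 1)) (a b : Fin r), w a q = w b q :=
    fun q a b => coeffs_eq_of_rel r v hsum hindep (fun c => w c q) (hw q) a b
  have hrpos : (0 : ℕ) < r := by omega
  set j0 : Fin r := ⟨0, hrpos⟩
  set lastq : Fin (d + 1) := ⟨d, Nat.lt_succ_self d⟩
  have hlift_last : ∀ y : Fin d → ℝ, liftOne d y lastq = 1 := by
    intro y; simp [liftOne, lastq]
  have hwc_last : ∀ c, w c lastq = ∑ i ∈ T c, α i := by
    intro c; simp [hwdef, hlift_last]
  -- sum of the fiber weights is 1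
  have hsum1 : ∑ c, w c lastq = 1 := by
    simp only [hwc_last, hT]
    rw [Finset.sum_fiberwise_eq_sum_filter Finset.univ Finset.univ j α]
    simpa using hα1
  have hr1 : ∑ c : Fin r, w c lastq = (r : ℝ) * w j0 lastq := by
    rw [Finset.sum_congr rfl fun c _ => hconst lastq c j0]
    simp [mul_comm]
  have hσpos : 0 < w j0 lastq := by
    have : (r : ℝ) * w j0 lastq = 1 := by rw [← hr1, hsum1]
    nlinarith [(Nat.one_le_cast (α := ℝ)).mpr (show 1 ≤ r by omega)]
  have hTpos : ∀ c, 0 < ∑ i ∈ T c, α i := by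
    intro c
    rw [← hwc_last, hconst lastq c j0]
    exact hσpos
  -- the common point
  refine ⟨(T j0).centerMass α x, Set.mem_iInter.mpr fun c => ?_⟩
  have hkey : (T j0).centerMass α x = (T c).centerMass α x := by
    unfold Finset.centerMass
    have hwt : ∑ i ∈ T j0, α i = ∑ i ∈ T c, α i := by
      rw [← hwc_last, ← hwc_last, hconst lastq j0 c]
    rw [hwt]
    congr 1
    funext q
    have h1 : ∀ c', (∑ i ∈ T c', α i • x i) q
        = w c' ⟨(q : ℕ), Nat.lt_succ_of_lt q.2⟩ := by
      intro c'
      simp only [Finset.sum_apply, Pi.smul_apply, smul_eq_mul, hwdef]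
      refine Finset.sum_congr rfl fun i _ => ?_
      simp [liftOne, q.2]
    rw [h1 j0, h1 c, hconst _ j0 c]
  rw [hkey]
  exact Finset.centerMass_mem_convexHull _ (fun i _ => hα i) (hTpos c)
    (fun i hi => ⟨i, (Finset.mem_filter.mp hi).2, rfl⟩)
end

section
/- Tverberg's theorem implies Lindström's theorem: if a, a point of R^n with nonnegative coordinates summing to 1, lies in the intersection of the convex hulls of r parts of a partition of the vectors chi_{A_i}/|A_i|, then letting J be the support of a, for each part there is a subset of indices whose sets A_i have union exactly J. -/
/-- The normalized characteristic vector χ_A / |A| ∈ ℝ^n of a subset A of [n]. -/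
noncomputable def normCharVec (n : ℕ) (A : Finset (Fin n)) : Fin n → ℝ :=
  fun k => (if k ∈ A then (1 : ℝ) else 0) / (A.card : ℝ)

/-- Tverberg implies Lindström: if a point a with nonnegative coordinates summing to 1
lies in the convex hull of each part of a partition of the vectors χ_{A_i}/|A_i|, then
with J the support of a, each part contains a set of indices whose sets A_i have union
exactly J. -/
theorem lindstrom_of_tverberg (n N r : ℕ)
    (A : Fin N → Finset (Fin n)) (hA : ∀ i, (A i).Nonempty)
    (I : Fin r → Finset (Fin N))
    (hdisj : ∀ j k, j ≠ k → Disjoint (I j) (I k))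
    (hcover : ∀ i : Fin N, ∃ j, i ∈ I j)
    (a : Fin n → ℝ) (ha0 : ∀ k, 0 ≤ a k) (ha1 : ∑ k, a k = 1)
    (haI : ∀ j, a ∈ convexHull ℝ ((fun i => normCharVec n (A i)) '' (I j : Set (Fin N)))) :
    ∀ j, ∃ S ⊆ I j, S.biUnion A = Finset.univ.filter (fun k => a k ≠ 0) := by
  intro j
  have h := haI j
  rw [convexHull_eq] at h
  obtain ⟨ι, t, w, z, hw0, hw1, hz, hcm⟩ := h
  choose m hmI hmz using fun i (hi : i ∈ t) => hz i hi
  have hak : ∀ k, a k = ∑ i ∈ t.attach,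
      w i.1 * ((if k ∈ A (m i.1 i.2) then (1 : ℝ) else 0) / ((A (m i.1 i.2)).card : ℝ)) := by
    intro k
    rw [Finset.centerMass_eq_of_sum_1 t z hw1] at hcm
    have : a k = ∑ i ∈ t, w i * z i k := by
      rw [← hcm]; simp [Finset.sum_apply]
    rw [this, ← Finset.sum_attach t (fun i => w i * z i k)]
    refine Finset.sum_congr rfl fun i _ => ?_
    rw [← hmz i.1 i.2]
    rfl
  refine ⟨(t.attach.filter (fun i => w i.1 ≠ 0)).image (fun i => m i.1 i.2), ?_, ?_⟩
  · intro q hq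
    simp only [Finset.mem_image, Finset.mem_filter] at hq
    obtain ⟨i, ⟨_, _⟩, rfl⟩ := hq
    exact hmI i.1 i.2
  · ext k
    simp only [Finset.mem_biUnion, Finset.mem_image, Finset.mem_filter, Finset.mem_univ,
      true_and, Finset.mem_attach]
    constructor
    · rintro ⟨q, ⟨i, hwi, rfl⟩, hk⟩
      have hpos : 0 < a k := by
        rw [hak k]
        refine Finset.sum_pos' (fun i' _ => ?_) ⟨i, Finset.mem_attach _ _, ?_⟩
        · have hw := hw0 i'.1 i'.2
          have hcard : (0:ℝ) ≤ ((A (m i'.1 i'.2)).card : ℝ) := Nat.cast_nonneg _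
          positivity
        · have hw := lt_of_le_of_ne (hw0 i.1 i.2) (Ne.symm hwi)
          have hcard : (0:ℝ) < ((A (m i.1 i.2)).card : ℝ) := by
            exact_mod_cast Finset.card_pos.mpr (hA _)
          rw [if_pos hk]
          positivity
      exact ne_of_gt hpos
    · intro hk
      rw [hak k] at hk
      obtain ⟨i, -, hne⟩ := Finset.exists_ne_zero_of_sum_ne_zero hk
      have hwi : w i.1 ≠ 0 := fun h => hne (by simp [h])
      have hki : k ∈ A (m i.1 i.2) := by
        by_contra hc
        exact hne (by simp [hc])
      exact ⟨m i.1 i.2, ⟨i, hwi, rfl⟩, hki⟩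
end

section
/- For every integers r >= 2 and t >= 0, any set of rt + 2r - 1 points on the real line admits a partition into r parts X_1, ..., X_r such that for every subset C of at most t points, the intersection of the convex hulls (intervals) of X_1 \ C, ..., X_r \ C is nonempty; moreover rt + 2r - 1 is the minimal such number. -/
open Finset

/-!
Sort the points as `x₀ < ⋯ < x_{n-1}`, `n = rt + 2r - 1`, and put `xᵢ` into part `i mod r`.
Finitely many intervals of the line meet as soon as every left endpoint is at most every right
endpoint. After deleting at most `t` points, two of the `t + 2` blocks
`{x_{ru}, …, x_{ru+r-1}}` (the last one lacking its final point) are untouched, and these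
supply a surviving point of part `j` below a surviving point of part `k`.

With `rt + 2r - 2` points, either some part has at most `t` points and can be deleted
entirely, or two parts have exactly `t + 1` points. In the latter case let `m` be the smallest
point of their union: deleting the other `t` points of its part leaves `{m}` strictly to the left
of the other part.
-/

theorem nonempty_iInter_convexHull_of_forall_exists_le {ι : Type*} [Fintype ι]
    (S : ι → Finset ℝ) (h : ∀ j k, ∃ a ∈ S j, ∃ b ∈ S k, a ≤ b) :
    (⋂ j, convexHull ℝ (S j : Set ℝ)).Nonempty := by
  cases isEmpty_or_nonempty ι
  · simp
  have hne (j : ι) : (S j).Nonempty := let ⟨a, ha, _⟩ := h j j; ⟨a, ha⟩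
  -- the largest of the left endpoints lies in every interval
  let z := univ.sup' univ_nonempty fun j => (S j).min' (hne j)
  obtain ⟨j, -, hj⟩ := exists_mem_eq_sup' univ_nonempty fun j => (S j).min' (hne j)
  refine ⟨z, Set.mem_iInter.2 fun k => ?_⟩
  obtain ⟨a, ha, b, hb, hab⟩ := h j k
  refine segment_subset_convexHull (mem_coe.2 (min'_mem _ (hne k)))
    (mem_coe.2 (max'_mem _ (hne k))) ?_
  rw [segment_eq_Icc (min'_le_max' _ (hne k))]
  exact ⟨le_sup' (fun j => (S j).min' (hne j)) (mem_univ k),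
    hj.le.trans <| (min'_le _ _ ha).trans (hab.trans (le_max' _ _ hb))⟩

theorem iInter_convexHull_eq_empty_of_subset_Iic_of_subset_Ioi {ι : Type*} (S : ι → Set ℝ)
    {a b : ι} {m : ℝ} (ha : S a ⊆ Set.Iic m) (hb : S b ⊆ Set.Ioi m) :
    ⋂ j, convexHull ℝ (S j) = ∅ :=
  Set.eq_empty_of_forall_notMem fun x hx =>
    (show m < x from convexHull_min hb (convex_Ioi m) (Set.mem_iInter.1 hx b)).not_ge
      (show x ≤ m from convexHull_min ha (convex_Iic m) (Set.mem_iInter.1 hx a))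

theorem exists_le_mod_eq_notMem {r t n : ℕ} (hr : 0 < r) (hn : r * t + 2 * r ≤ n + 1)
    (D : Finset (Fin n)) (hD : #D ≤ t) {j k : ℕ} (hj : j < r) (hk : k < r) :
    ∃ a b : Fin n, a ≤ b ∧ (a : ℕ) % r = j ∧ (b : ℕ) % r = k ∧ a ∉ D ∧ b ∉ D := by
  -- At most `t` of the `t + 2` blocks `[r u, r u + r)` meet `D`; take two free ones `s < s'`.
  -- If `k < j` then `k ≤ r - 2`, so `r s' + k` is still below `n` even for `s' = t + 1`.
  set F := range (t + 2) \ D.image fun d : Fin n => (d : ℕ) / r with hFdef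
  have hF : 1 < #F := by
    have := le_card_sdiff (D.image fun d : Fin n => (d : ℕ) / r) (range (t + 2))
    rw [card_range, ← hFdef] at this
    have := card_image_le (s := D) (f := fun d : Fin n => (d : ℕ) / r)
    omega
  have hfree : ∀ u ∈ F, ∀ i < r, ∀ h : r * u + i < n, (⟨r * u + i, h⟩ : Fin n) ∉ D :=
    fun u hu i hi h hD => (mem_sdiff.1 hu).2 <| mem_image.2
      ⟨_, hD, by simp [Nat.mul_add_div hr, Nat.div_eq_of_lt hi]⟩
  have hmod (u i : ℕ) (hi : i < r) : (r * u + i) % r = i := by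
    rw [Nat.mul_add_mod, Nat.mod_eq_of_lt hi]
  have hFne : F.Nonempty := card_pos.1 (by omega)
  set s := F.min' hFne
  have hs : s ∈ F := F.min'_mem hFne
  obtain ⟨s', hs', hne⟩ := exists_mem_ne hF s
  have hss' : s + 1 ≤ s' := lt_of_le_of_ne (min'_le _ _ hs') hne.symm
  have hs't : s' ≤ t + 1 := Nat.lt_succ_iff.1 (mem_range.1 (mem_sdiff.1 hs').1)
  have h₁ : r * s + r ≤ r * s' := by nlinarith
  have h₂ : r * s' ≤ r * t + r := by nlinarith
  rcases le_or_gt j k with hjk | hkj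
  · exact ⟨⟨r * s + j, by omega⟩, ⟨r * s + k, by omega⟩, Fin.mk_le_mk.2 (by omega),
      hmod s j hj, hmod s k hk, hfree s hs j hj _, hfree s hs k hk _⟩
  · exact ⟨⟨r * s + j, by omega⟩, ⟨r * s' + k, by omega⟩, Fin.mk_le_mk.2 (by omega),
      hmod s j hj, hmod s' k hk, hfree s hs j hj _, hfree s' hs' k hk _⟩

section CyclicPart

variable {α : Type*} [LinearOrder α] {X : Finset α} {n : ℕ} (hX : #X = n) (r : ℕ)

def cyclicPart (j : ℕ) : Finset α :=
  (univ.filter fun i : Fin n => (i : ℕ) % r = j).map (X.orderEmbOfFin hX).toEmbedding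

variable {hX r}

theorem mem_cyclicPart {j : ℕ} {x : α} :
    x ∈ cyclicPart hX r j ↔ ∃ i : Fin n, (i : ℕ) % r = j ∧ X.orderEmbOfFin hX i = x := by
  simp [cyclicPart]

theorem cyclicPart_subset (j : ℕ) : cyclicPart hX r j ⊆ X := fun x hx => by
  obtain ⟨i, -, rfl⟩ := mem_cyclicPart.1 hx
  exact orderEmbOfFin_mem X hX i

theorem disjoint_cyclicPart {j k : ℕ} (hjk : j ≠ k) :
    Disjoint (cyclicPart hX r j) (cyclicPart hX r k) :=
  disjoint_left.2 fun x hxj hxk => by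
    obtain ⟨i, hi, rfl⟩ := mem_cyclicPart.1 hxj
    obtain ⟨i', hi', hii'⟩ := mem_cyclicPart.1 hxk
    obtain rfl := (X.orderEmbOfFin hX).injective hii'
    exact hjk (hi ▸ hi')

theorem exists_mem_cyclicPart (hr : 0 < r) {x : α} (hx : x ∈ X) :
    ∃ j : Fin r, x ∈ cyclicPart hX r j := by
  obtain ⟨i, rfl⟩ : x ∈ Set.range (X.orderEmbOfFin hX) := by
    rwa [range_orderEmbOfFin]
  exact ⟨⟨i % r, Nat.mod_lt _ hr⟩, mem_cyclicPart.2 ⟨i, rfl, rfl⟩⟩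

end CyclicPart

theorem nonempty_iInter_convexHull_cyclicPart_sdiff {X : Finset ℝ} {r t n : ℕ} (hX : #X = n)
    (hr : 0 < r) (hn : r * t + 2 * r ≤ n + 1) {C : Finset ℝ} (hC : #C ≤ t) :
    (⋂ j : Fin r, convexHull ℝ ((cyclicPart hX r j \ C : Finset ℝ) : Set ℝ)).Nonempty := by
  set e := X.orderEmbOfFin hX
  refine nonempty_iInter_convexHull_of_forall_exists_le _ fun j k => ?_
  have hD : #(univ.filter fun i => e i ∈ C) ≤ t :=
    (card_le_card_of_injOn e (fun i hi => by simpa using hi) e.injective.injOn).trans hC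
  obtain ⟨a, b, hab, ha, hb, haC, hbC⟩ := exists_le_mod_eq_notMem hr hn _ hD j.2 k.2
  exact ⟨e a, mem_sdiff.2 ⟨mem_cyclicPart.2 ⟨a, ha, rfl⟩, by simpa using haC⟩,
    e b, mem_sdiff.2 ⟨mem_cyclicPart.2 ⟨b, hb, rfl⟩, by simpa using hbC⟩, e.monotone hab⟩

theorem exists_le_or_exists_ne_eq_add_one {ι : Type*} [Fintype ι] (c : ι → ℕ) {t : ℕ}
    (h : ∑ i, c i + 2 ≤ Fintype.card ι * (t + 2)) :
    (∃ i, c i ≤ t) ∨ ∃ i j, i ≠ j ∧ c i = t + 1 ∧ c j = t + 1 := by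
  by_contra! ⟨hbig, hone⟩
  have hcard : #(univ.filter fun i => c i = t + 1) ≤ 1 :=
    card_le_one.2 fun i hi j hj =>
      by_contra fun hij => hone i j hij (by simpa using hi) (by simpa using hj)
  have hle (i : ι) : t + 2 ≤ c i + if c i = t + 1 then 1 else 0 := by
    have := hbig i
    split_ifs <;> omega
  have := sum_le_sum fun i (_ : i ∈ univ) => hle i
  rw [sum_const, card_univ, smul_eq_mul, sum_add_distrib, ← card_filter] at this
  omega

theorem exists_iInter_convexHull_sdiff_eq_empty_of_mem_of_forall_le {ι : Type*}
    {P : ι → Finset ℝ} {a b : ι} {t : ℕ} (hab : Disjoint (P a) (P b)) (ha : #(P a) ≤ t + 1)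
    {m : ℝ} (hm : m ∈ P a) (hmb : ∀ x ∈ P b, m ≤ x) :
    ∃ C ⊆ P a, #C ≤ t ∧ ⋂ j, convexHull ℝ ((P j \ C : Finset ℝ) : Set ℝ) = ∅ := by
  refine ⟨(P a).erase m, erase_subset _ _, by rw [card_erase_of_mem hm]; omega, ?_⟩
  refine iInter_convexHull_eq_empty_of_subset_Iic_of_subset_Ioi _ (a := a) (b := b) (m := m)
    (fun x hx => ?_) fun x hx => ?_
  · simp_all
  · have hx : x ∈ P b := (mem_sdiff.1 hx).1
    exact (hmb x hx).lt_of_ne fun h => disjoint_left.1 hab hm (h ▸ hx)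

theorem exists_iInter_convexHull_sdiff_eq_empty {ι : Type*} [Fintype ι] {X : Finset ℝ} {t : ℕ}
    (hX : #X + 2 ≤ Fintype.card ι * (t + 2)) (P : ι → Finset ℝ) (hsub : ∀ j, P j ⊆ X)
    (hdisj : ∀ j k, j ≠ k → Disjoint (P j) (P k)) :
    ∃ C ⊆ X, #C ≤ t ∧ ⋂ j, convexHull ℝ ((P j \ C : Finset ℝ) : Set ℝ) = ∅ := by
  have hsum : ∑ j, #(P j) ≤ #X := by
    rw [← card_biUnion fun j _ k _ hjk => hdisj j k hjk]
    exact card_le_card (biUnion_subset.2 fun j _ => hsub j)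
  rcases exists_le_or_exists_ne_eq_add_one (fun j => #(P j)) (t := t) (by omega) with
    ⟨a, ha⟩ | ⟨a, b, hab, ha, hb⟩
  · refine ⟨P a, hsub a, ha, Set.subset_empty_iff.1 ((Set.iInter_subset _ a).trans ?_)⟩
    simp
  · have hne : (P a ∪ P b).Nonempty :=
      (card_pos.1 (by omega : 0 < #(P a))).mono subset_union_left
    rcases mem_union.1 (min'_mem _ hne) with hm | hm
    · obtain ⟨C, hCa, hC⟩ := exists_iInter_convexHull_sdiff_eq_empty_of_mem_of_forall_le
        (hdisj a b hab) ha.le hm fun x hx => min'_le _ _ (mem_union_right _ hx)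
      exact ⟨C, hCa.trans (hsub a), hC⟩
    · obtain ⟨C, hCb, hC⟩ := exists_iInter_convexHull_sdiff_eq_empty_of_mem_of_forall_le
        (hdisj b a hab.symm) hb.le hm fun x hx => min'_le _ _ (mem_union_left _ hx)
      exact ⟨C, hCb.trans (hsub b), hC⟩

/-- Tverberg with tolerance on the line (Mulzer–Stein): N(r,t,1) = rt + 2r - 1. Any
rt + 2r - 1 points of ℝ admit a partition into r parts such that after removing any t
points the convex hulls of the parts still intersect, and rt + 2r - 2 points do not
suffice. -/
theorem tverberg_tolerance_dim_one (r t : ℕ) (hr : 2 ≤ r) :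
    (∀ X : Finset ℝ, X.card = r * t + 2 * r - 1 →
      ∃ P : Fin r → Finset ℝ,
        (∀ j, P j ⊆ X) ∧ (∀ j k, j ≠ k → Disjoint (P j) (P k)) ∧
        (∀ x ∈ X, ∃ j, x ∈ P j) ∧
        ∀ C ⊆ X, C.card ≤ t →
          (⋂ j, convexHull ℝ ((P j \ C : Finset ℝ) : Set ℝ)).Nonempty) ∧
    (∃ X : Finset ℝ, X.card = r * t + 2 * r - 2 ∧
      ∀ P : Fin r → Finset ℝ,
        (∀ j, P j ⊆ X) → (∀ j k, j ≠ k → Disjoint (P j) (P k)) →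
        (∀ x ∈ X, ∃ j, x ∈ P j) →
        ∃ C ⊆ X, C.card ≤ t ∧
          (⋂ j, convexHull ℝ ((P j \ C : Finset ℝ) : Set ℝ)) = ∅) := by
  constructor
  · intro X hX
    exact ⟨fun j => cyclicPart hX r j, fun j => cyclicPart_subset j,
      fun j k hjk => disjoint_cyclicPart (Fin.val_injective.ne hjk),
      fun x hx => exists_mem_cyclicPart (by omega) hx,
      fun C _ hC => nonempty_iInter_convexHull_cyclicPart_sdiff hX (by omega) (by omega) hC⟩
  · have hcard : #((range (r * t + 2 * r - 2)).image ((↑) : ℕ → ℝ)) = r * t + 2 * r - 2 := by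
      rw [card_image_of_injective _ Nat.cast_injective, card_range]
    refine ⟨_, hcard, fun P hsub hdisj _ =>
      exists_iInter_convexHull_sdiff_eq_empty ?_ P hsub hdisj⟩
    rw [hcard, Fintype.card_fin, mul_add]
    omega
end

section
/- If X is a set of n points in the moment curve with rapidly increasing parameters, the number of special r-partitions of {1, ..., (r-1)(d+1)+1} equals (r-1)!^d. -/
/-- The k-th block M_k ⊆ [n] (0-indexed): the r consecutive integers
(r-1)k, ..., (r-1)k + (r-1); consecutive blocks share one element. -/
def tverbergBlock (d r : ℕ) (k : Fin (d + 1)) :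
    Finset (Fin ((r - 1) * (d + 1) + 1)) :=
  Finset.univ.filter (fun i => (r - 1) * (k : ℕ) ≤ (i : ℕ) ∧
    (i : ℕ) ≤ (r - 1) * (k : ℕ) + (r - 1))

/-!
Write `q = r - 1`, so that block `k` consists of the points `q * k + t`, `t ≤ q`. Labelling each
part by its unique point of the first block turns a special partition into a colouring
`c : [n] → Fin r` that fixes the first block pointwise and is bijective on every block, that is,
into a sequence of permutations `σ k = (t ↦ c (q * k + t))` with `σ 0 = 1` and
`σ (k + 1) 0 = σ k q`, the point `q * (k + 1)` being shared by consecutive blocks. The increments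
`σ k⁻¹ * σ (k + 1)` are exactly the `d` independent permutations sending `0` to `q`, and there are
`q!` of those.
-/

open Finset Function Equiv

theorem card_perm_fin_succ_apply_zero_eq (n : ℕ) (p : Fin (n + 1)) :
    Fintype.card {σ : Perm (Fin (n + 1)) // σ 0 = p} = n.factorial := by
  have e : {σ : Perm (Fin (n + 1)) // σ 0 = p} ≃ {x : Fin (n + 1) // x = p} × Perm (Fin n) :=
    ((Perm.decomposeFin.symm.subtypeEquiv fun ⟨x, τ⟩ => by
      rw [Perm.decomposeFin_symm_apply_zero]).symm.trans prodSubtypeFstEquivSubtypeProd)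
  rw [Fintype.card_congr e, Fintype.card_prod, Fintype.card_unique, one_mul, Fintype.card_perm,
    Fintype.card_fin]

def chainEquivPi {G X : Type*} [Group G] [MulAction G X] (a b : X) (n : ℕ) :
    {g : Fin (n + 1) → G // g 0 = 1 ∧ ∀ k : Fin n, g k.succ • a = g k.castSucc • b} ≃
      (Fin n → {h : G // h • a = b}) where
  toFun g k := ⟨(g.1 k.castSucc)⁻¹ * g.1 k.succ, by rw [mul_smul, g.2.2 k, inv_smul_smul]⟩
  invFun h := ⟨Fin.partialProd fun k => (h k : G), Fin.partialProd_zero _, fun k => by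
    rw [Fin.partialProd_succ, mul_smul, (h k).2]⟩
  left_inv g := by
    ext1
    simpa [g.2.1] using Fin.partialProd_left_inv g.1
  right_inv h := by
    ext1 k
    exact Subtype.ext (Fin.partialProd_right_inv _ k)

theorem card_inter_image_eq_one_iff {α γ : Type*} [Fintype γ] [DecidableEq α] {g : γ → α}
    (hg : Injective g) (I : Finset α) : (I ∩ univ.image g).card = 1 ↔ ∃! t, g t ∈ I := by
  rw [Fintype.existsUnique_iff_card_one, ← card_image_of_injective _ hg, inter_comm,
    ← filter_mem_eq_inter, filter_image]

section ColorClasses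

variable {α β : Type*} [Fintype α] [Fintype β] [DecidableEq α] [DecidableEq β]

def colorClasses (c : α → β) : Finset (Finset α) :=
  univ.image fun b => univ.filter fun a => c a = b

theorem colorClasses_pairwiseDisjoint (c : α → β) :
    ∀ I ∈ colorClasses c, ∀ J ∈ colorClasses c, I ≠ J → Disjoint I J := by
  simp only [colorClasses, forall_mem_image, mem_univ, forall_const]
  intro b b' hne
  exact disjoint_filter.mpr fun a _ hb hb' => hne (by rw [← hb, ← hb'])

theorem exists_mem_colorClasses (c : α → β) (a : α) : ∃ I ∈ colorClasses c, a ∈ I :=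
  ⟨univ.filter fun x => c x = c a, mem_image_of_mem _ (mem_univ _), by simp⟩

theorem card_colorClasses {c : α → β} (hc : Surjective c) :
    (colorClasses c).card = Fintype.card β := by
  refine card_image_of_injective _ fun b b' h => ?_
  obtain ⟨a, rfl⟩ := hc b
  have : a ∈ univ.filter fun x => c x = c a := by simp
  simpa [h] using this

theorem forall_colorClasses_existsUnique_iff {γ : Type*} (c : α → β) (g : γ → α) :
    (∀ I ∈ colorClasses c, ∃! t, g t ∈ I) ↔ Bijective (c ∘ g) := by
  simp [colorClasses, bijective_iff_existsUnique]

theorem eq_of_colorClasses_eq {e : β → α} {c c' : α → β} (hc : LeftInverse c e)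
    (hc' : LeftInverse c' e) (h : colorClasses c = colorClasses c') : c = c' := by
  funext a
  have hmem : (univ.filter fun x => c x = c a) ∈ colorClasses c' :=
    h ▸ mem_image_of_mem _ (mem_univ _)
  obtain ⟨b, -, hb⟩ := mem_image.mp hmem
  have hea : e (c a) ∈ univ.filter fun x => c' x = b := by simp [hb, hc (c a)]
  have ha : a ∈ univ.filter fun x => c' x = b := by simp [hb]
  simp only [mem_filter, mem_univ, true_and, hc' (c a)] at hea ha
  rw [hea, ha]

theorem exists_leftInverse_colorClasses_eq {e : β → α} {P : Finset (Finset α)}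
    (hdisj : ∀ I ∈ P, ∀ J ∈ P, I ≠ J → Disjoint I J) (hcover : ∀ a, ∃ I ∈ P, a ∈ I)
    (htrans : ∀ I ∈ P, ∃! b, e b ∈ I) :
    ∃ c : α → β, LeftInverse c e ∧ colorClasses c = P := by
  choose part hpartP hpart using hcover
  have part_eq : ∀ I ∈ P, ∀ a ∈ I, part a = I := fun I hI a ha =>
    by_contra fun hne => disjoint_left.mp (hdisj _ (hpartP a) I hI hne) (hpart a) ha
  let c a := (htrans _ (hpartP a)).exists.choose
  have hc : ∀ a b, c a = b ↔ e b ∈ part a := fun a b =>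
    ⟨fun h => h ▸ (htrans _ (hpartP a)).exists.choose_spec,
      fun h => (htrans _ (hpartP a)).unique (htrans _ (hpartP a)).exists.choose_spec h⟩
  have same_part : ∀ a a', a' ∈ part a ↔ a ∈ part a' := fun a a' =>
    ⟨fun h => part_eq _ (hpartP a) a' h ▸ hpart a, fun h => part_eq _ (hpartP a') a h ▸ hpart a'⟩
  have fiber_eq : ∀ b, (univ.filter fun a => c a = b) = part (e b) := fun b => by
    ext a
    simp [hc, same_part]
  refine ⟨c, fun b => (hc _ _).mpr (hpart _), ?_⟩
  ext I
  simp only [colorClasses, mem_image, mem_univ, true_and, fiber_eq]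
  refine ⟨?_, fun hI => ?_⟩
  · rintro ⟨b, rfl⟩
    exact hpartP _
  · obtain ⟨b, hb, -⟩ := htrans I hI
    exact ⟨b, part_eq I hI _ hb⟩

end ColorClasses

def blockPoint (q d : ℕ) (k : Fin (d + 1)) (t : Fin (q + 1)) : Fin (q * (d + 1) + 1) :=
  ⟨q * k + t, Nat.lt_succ_of_le <| calc
    q * k + t ≤ q * d + q := add_le_add (Nat.mul_le_mul_left _ k.is_le) t.is_le
    _ = q * (d + 1) := by ring⟩

section Blocks

variable {q d : ℕ}

theorem blockPoint_succ_zero (k : Fin d) :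
    blockPoint q d k.succ 0 = blockPoint q d k.castSucc (Fin.last q) :=
  Fin.ext (by simp [blockPoint]; ring)

theorem blockPoint_injective (k : Fin (d + 1)) : Injective (blockPoint q d k) :=
  fun t t' h => Fin.ext (by simpa [blockPoint] using congrArg Fin.val h)

theorem tverbergBlock_eq_image_blockPoint (k : Fin (d + 1)) :
    tverbergBlock d (q + 1) k = univ.image (blockPoint q d k) := by
  ext i
  simp only [tverbergBlock, Nat.add_sub_cancel, mem_filter, mem_univ, true_and, mem_image,
    blockPoint, Fin.ext_iff]
  constructor
  · rintro ⟨h₁, h₂⟩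
    exact ⟨⟨i - q * k, by omega⟩, by simp only; omega⟩
  · rintro ⟨t, ht⟩
    exact ⟨by omega, by have := t.is_le; omega⟩

theorem blockPoint_surjective : Surjective (uncurry (blockPoint q d)) := by
  intro i
  obtain rfl | hq := q.eq_zero_or_pos
  · exact ⟨(0, 0), Fin.ext (by simp [blockPoint]; omega)⟩
  have hi := i.isLt
  have hdiv := Nat.div_add_mod i q
  have hmod := Nat.mod_lt i hq
  have hd : q * (d + 1) = q * d + q := by ring
  rcases le_total (i / q) d with hle | hle
  · refine ⟨(⟨i / q, by omega⟩, ⟨i % q, by omega⟩), Fin.ext ?_⟩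
    simp only [uncurry_apply_pair, blockPoint]
    omega
  · have := Nat.mul_le_mul_left q hle
    refine ⟨(Fin.last d, ⟨i - q * d, by omega⟩), Fin.ext ?_⟩
    simp only [uncurry_apply_pair, blockPoint, Fin.val_last]
    omega

theorem apply_eq_apply_of_blockPoint_eq {γ : Type*} (hq : 0 < q)
    {f : Fin (d + 1) → Fin (q + 1) → γ} (hf : ∀ k : Fin d, f k.succ 0 = f k.castSucc (Fin.last q))
    {k k' : Fin (d + 1)} {t t' : Fin (q + 1)} (h : blockPoint q d k t = blockPoint q d k' t') :
    f k t = f k' t' := by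
  wlog hkk : k ≤ k' generalizing k k' t t'
  · exact (this h.symm (le_of_not_ge hkk)).symm
  have h' : q * k + t = q * k' + t' := congrArg Fin.val h
  rcases hkk.eq_or_lt with rfl | hlt
  · obtain rfl : t = t' := Fin.ext (by omega)
    rfl
  · have hk' : (k' : ℕ) = k + 1 := by
      by_contra hne
      have := Nat.mul_le_mul_left q (show (k : ℕ) + 2 ≤ k' by omega)
      have := t.is_le
      nlinarith
    have ht : (t : ℕ) = q + t' := by rw [hk', mul_add] at h'; omega
    have htq : t = Fin.last q := Fin.ext (by rw [Fin.val_last]; have := t.is_le; omega)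
    have ht' : t' = 0 := Fin.ext (by rw [Fin.val_zero]; have := t.is_le; omega)
    let j : Fin d := ⟨k, by omega⟩
    rw [show k = j.castSucc from rfl, show k' = j.succ from Fin.ext hk', htq, ht']
    exact (hf j).symm

noncomputable def glue {γ : Type*} (f : Fin (d + 1) → Fin (q + 1) → γ)
    (i : Fin (q * (d + 1) + 1)) : γ :=
  uncurry f (surjInv blockPoint_surjective i)

theorem glue_blockPoint {γ : Type*} (hq : 0 < q) {f : Fin (d + 1) → Fin (q + 1) → γ}
    (hf : ∀ k : Fin d, f k.succ 0 = f k.castSucc (Fin.last q)) (k : Fin (d + 1))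
    (t : Fin (q + 1)) : glue f (blockPoint q d k t) = f k t :=
  apply_eq_apply_of_blockPoint_eq hq hf (surjInv_eq blockPoint_surjective _)

end Blocks

def SpecialColoring (q d : ℕ) : Type :=
  {c : Fin (q * (d + 1) + 1) → Fin (q + 1) //
    LeftInverse c (blockPoint q d 0) ∧ ∀ k, Bijective (c ∘ blockPoint q d k)}

def SpecialPartition (d r : ℕ) : Type :=
  {P : Finset (Finset (Fin ((r - 1) * (d + 1) + 1))) //
      P.card = r ∧
      (∀ I ∈ P, ∀ J ∈ P, I ≠ J → Disjoint I J) ∧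
      (∀ i : Fin ((r - 1) * (d + 1) + 1), ∃ I ∈ P, i ∈ I) ∧
      (∀ I ∈ P, ∀ k : Fin (d + 1), (I ∩ tverbergBlock d r k).card = 1)}

theorem forall_card_inter_tverbergBlock_iff {q d : ℕ} (c : Fin (q * (d + 1) + 1) → Fin (q + 1))
    (k : Fin (d + 1)) :
    (∀ I ∈ colorClasses c, (I ∩ tverbergBlock d (q + 1) k).card = 1) ↔
      Bijective (c ∘ blockPoint q d k) := by
  simp_rw [tverbergBlock_eq_image_blockPoint, card_inter_image_eq_one_iff (blockPoint_injective k)]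
  exact forall_colorClasses_existsUnique_iff _ _

noncomputable def specialColoringEquivPartition (q d : ℕ) :
    SpecialColoring q d ≃ SpecialPartition d (q + 1) := by
  refine Equiv.ofBijective (fun c => ⟨colorClasses c.1,
    (card_colorClasses c.2.1.surjective).trans (Fintype.card_fin _),
    colorClasses_pairwiseDisjoint _, exists_mem_colorClasses _,
    fun I hI k => (forall_card_inter_tverbergBlock_iff c.1 k).mpr (c.2.2 k) I hI⟩) ⟨?_, ?_⟩
  · exact fun c c' h => Subtype.ext (eq_of_colorClasses_eq c.2.1 c'.2.1 (congrArg Subtype.val h))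
  · rintro ⟨P, -, hdisj, hcover, hblock⟩
    have htrans : ∀ I ∈ P, ∃! t, blockPoint q d 0 t ∈ I := fun I hI => by
      rw [← card_inter_image_eq_one_iff (blockPoint_injective 0),
        ← tverbergBlock_eq_image_blockPoint]
      exact hblock I hI 0
    obtain ⟨c, hc, rfl⟩ := exists_leftInverse_colorClasses_eq hdisj hcover htrans
    exact ⟨⟨c, hc, fun k => (forall_card_inter_tverbergBlock_iff c k).mp fun I hI => hblock I hI k⟩,
      rfl⟩

noncomputable def specialColoringEquivChain {q d : ℕ} (hq : 0 < q) :
    SpecialColoring q d ≃ {σ : Fin (d + 1) → Perm (Fin (q + 1)) //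
      σ 0 = 1 ∧ ∀ k : Fin d, σ k.succ • (0 : Fin (q + 1)) = σ k.castSucc • Fin.last q} where
  toFun c := ⟨fun k => Equiv.ofBijective _ (c.2.2 k), Equiv.ext c.2.1,
    fun k => congrArg c.1 (blockPoint_succ_zero k)⟩
  invFun σ := ⟨glue fun k t => σ.1 k t,
    fun t => by rw [glue_blockPoint hq σ.2.2, σ.2.1]; rfl,
    fun k => by
      convert (σ.1 k).bijective
      funext t
      exact glue_blockPoint hq σ.2.2 k t⟩
  left_inv c := Subtype.ext <| funext fun i => by
    obtain ⟨⟨k, t⟩, rfl⟩ := blockPoint_surjective i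
    exact glue_blockPoint (f := fun k t => c.1 (blockPoint q d k t)) hq
      (fun k => congrArg c.1 (blockPoint_succ_zero k)) k t
  right_inv σ := Subtype.ext <| funext fun k => Equiv.ext fun t =>
    glue_blockPoint (f := fun k t => σ.1 k t) hq σ.2.2 k t

theorem card_special_partitions_general (d r : ℕ) (hr : 2 ≤ r) :
    Nat.card {P : Finset (Finset (Fin ((r - 1) * (d + 1) + 1))) //
      P.card = r ∧
      (∀ I ∈ P, ∀ J ∈ P, I ≠ J → Disjoint I J) ∧
      (∀ i : Fin ((r - 1) * (d + 1) + 1), ∃ I ∈ P, i ∈ I) ∧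
      (∀ I ∈ P, ∀ k : Fin (d + 1), (I ∩ tverbergBlock d r k).card = 1)} =
    (r - 1).factorial ^ d := by
  obtain ⟨q, rfl⟩ : ∃ q, r = q + 1 := ⟨r - 1, by omega⟩
  have hq : 0 < q := by omega
  calc Nat.card (SpecialPartition d (q + 1))
      = Nat.card (Fin d → {τ : Perm (Fin (q + 1)) // τ • 0 = Fin.last q}) :=
        Nat.card_congr ((specialColoringEquivPartition q d).symm.trans
          ((specialColoringEquivChain hq).trans (chainEquivPi _ _ d)))
    _ = q.factorial ^ d := by
        simp [Nat.card_eq_fintype_card, Perm.smul_def, card_perm_fin_succ_apply_zero_eq]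

/-- The number of special r-partitions of [n], n = (r-1)(d+1)+1, i.e. (unordered)
partitions of [n] into r parts each meeting every block M_k in exactly one element,
equals ((r-1)!)^d. -/
theorem card_special_partitions (d r : ℕ) (hd : 1 ≤ d) (hr : 2 ≤ r) :
    Nat.card {P : Finset (Finset (Fin ((r - 1) * (d + 1) + 1))) //
      P.card = r ∧
      (∀ I ∈ P, ∀ J ∈ P, I ≠ J → Disjoint I J) ∧
      (∀ i : Fin ((r - 1) * (d + 1) + 1), ∃ I ∈ P, i ∈ I) ∧
      (∀ I ∈ P, ∀ k : Fin (d + 1), (I ∩ tverbergBlock d r k).card = 1)} =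
    (r - 1).factorial ^ d :=
  card_special_partitions_general d r hr
end

section
/- For points in general position, Reay's dimension conjecture implies Kalai's cascade conjecture: if for all 0 <= k <= d every set of (r-1)(d+1)+k+1 points in general position in R^d satisfies dim(T_r(X)) >= k, then every finite set X of points in general position in R^d satisfies sum over s of dim(T_s(X)) >= 0. -/
open MeasureTheory
open scoped Classical

/-- A finite set in ℝ^d is in general position if no d+1 of its points lie in a common
hyperplane, i.e. every subset of d+1 points is affinely independent. -/
def InGeneralPosition (d : ℕ) (X : Finset (Fin d → ℝ)) : Prop :=
  ∀ S ⊆ X, S.card = d + 1 → AffineIndependent ℝ (fun p : (S : Set (Fin d → ℝ)) => (p : Fin d → ℝ))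

/-- T_s(X): the set of points lying in the intersection of the convex hulls of the parts
of some partition of X into s parts. -/
def tverbergPoints (d s : ℕ) (X : Finset (Fin d → ℝ)) : Set (Fin d → ℝ) :=
  {p | ∃ P : Fin s → Finset (Fin d → ℝ),
    (∀ j, P j ⊆ X) ∧ (∀ j k, j ≠ k → Disjoint (P j) (P k)) ∧
    (∀ x ∈ X, ∃ j, x ∈ P j) ∧
    ∀ j, p ∈ convexHull ℝ ((P j : Set (Fin d → ℝ)))}

/-- Hausdorff dimension with the convention dim ∅ = -1, as a real number. -/
noncomputable def hdim (d : ℕ) (A : Set (Fin d → ℝ)) : ℝ :=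
  if A = ∅ then -1 else (dimH A).toReal

/-!
Write `|X| = m (d + 1) + k + 1` with `k ≤ d`. Tverberg point sets grow with `X` (new points can
all be thrown into one part), so for `s ≤ m` the set `T_s(X)` contains `T_s(Y)` for a subset `Y`
of `s (d + 1)` points, which Reay's conjecture with `k = d` makes `d`-dimensional; the conjecture
applied to `X` itself gives `dim T_{m+1}(X) ≥ k`. The remaining `m d + k` terms are at least `-1`,
so the sum is at least `m d + k - (m d + k) = 0`.
-/

open Finset

def ReayConjecture (d : ℕ) : Prop :=
  ∀ r k : ℕ, 1 ≤ r → k ≤ d → ∀ X : Finset (Fin d → ℝ),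
    X.card = (r - 1) * (d + 1) + k + 1 → InGeneralPosition d X →
    (k : ℝ) ≤ hdim d (tverbergPoints d r X)

theorem InGeneralPosition.mono {d : ℕ} {X Y : Finset (Fin d → ℝ)} (hY : InGeneralPosition d Y)
    (hXY : X ⊆ Y) : InGeneralPosition d X :=
  fun S hS hcard => hY S (hS.trans hXY) hcard

theorem neg_one_le_hdim (d : ℕ) (A : Set (Fin d → ℝ)) : -1 ≤ hdim d A := by
  unfold hdim
  split_ifs
  · exact le_rfl
  · linarith [ENNReal.toReal_nonneg (a := dimH A)]

theorem hdim_mono {d : ℕ} {A B : Set (Fin d → ℝ)} (hAB : A ⊆ B) : hdim d A ≤ hdim d B := by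
  by_cases hA : A = ∅
  · simpa [hdim, hA] using neg_one_le_hdim d B
  have hB : B ≠ ∅ := fun hB => hA (Set.subset_eq_empty hAB hB)
  have hB_fin : dimH B ≠ ⊤ :=
    ne_top_of_le_ne_top (ENNReal.natCast_ne_top d)
      ((dimH_mono (Set.subset_univ B)).trans_eq (Real.dimH_univ_pi_fin d))
  simp only [hdim, hA, hB, if_false]
  exact ENNReal.toReal_mono hB_fin (dimH_mono hAB)

theorem tverbergPoints_mono {d s : ℕ} (hs : 0 < s) {X Y : Finset (Fin d → ℝ)} (hXY : X ⊆ Y) :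
    tverbergPoints d s X ⊆ tverbergPoints d s Y := by
  rintro p ⟨P, hsub, hdisj, hcov, hconv⟩
  let i₀ : Fin s := ⟨0, hs⟩
  let Q := Function.update P i₀ (P i₀ ∪ (Y \ X))
  have hPQ (j : Fin s) : P j ⊆ Q j := by
    by_cases hj : j = i₀
    · subst hj; simp [Q]
    · simp [Q, hj]
  have hQP (j : Fin s) : Q j ⊆ P j ∪ (Y \ X) := by
    by_cases hj : j = i₀
    · subst hj; simp [Q]
    · simp [Q, hj]
  have hold (j : Fin s) {x} (hx : x ∈ Q j) (hxX : x ∈ X) : x ∈ P j := by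
    simpa [hxX] using hQP j hx
  have hnew (j : Fin s) {x} (hx : x ∈ Q j) (hxX : x ∉ X) : j = i₀ := by
    by_contra hj
    exact hxX (hsub j (by simpa [Q, hj] using hx))
  refine ⟨Q, fun j => (hQP j).trans (union_subset ((hsub j).trans hXY) sdiff_subset),
    fun j k hjk => disjoint_left.2 fun x hxj hxk => ?_, fun x hx => ?_,
    fun j => convexHull_mono (by exact_mod_cast hPQ j) (hconv j)⟩
  · by_cases hxX : x ∈ X
    · exact disjoint_left.1 (hdisj j k hjk) (hold j hxj hxX) (hold k hxk hxX)
    · exact hjk ((hnew j hxj hxX).trans (hnew k hxk hxX).symm)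
  · by_cases hxX : x ∈ X
    · obtain ⟨j, hj⟩ := hcov x hxX
      exact ⟨j, hPQ j hj⟩
    · exact ⟨i₀, by simp [Q, hx, hxX]⟩

theorem ReayConjecture.le_hdim_tverbergPoints {d s : ℕ} (reay : ReayConjecture d) (hs : 0 < s)
    {X : Finset (Fin d → ℝ)} (hX : InGeneralPosition d X) (hcard : s * (d + 1) ≤ X.card) :
    (d : ℝ) ≤ hdim d (tverbergPoints d s X) := by
  have hsize : (s - 1) * (d + 1) + d + 1 = s * (d + 1) := by
    obtain ⟨t, rfl⟩ := Nat.exists_eq_add_of_lt hs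
    simp only [zero_add, Nat.add_sub_cancel]
    ring
  obtain ⟨Y, hYX, hY⟩ := exists_subset_card_eq (hsize ▸ hcard)
  calc (d : ℝ) ≤ hdim d (tverbergPoints d s Y) := reay s d hs le_rfl Y hY (hX.mono hYX)
    _ ≤ hdim d (tverbergPoints d s X) := hdim_mono (tverbergPoints_mono hs hYX)

theorem sum_Icc_nonneg_of_bounds {d m k : ℕ} (f : ℕ → ℝ) (hhead : ∀ s ∈ Icc 1 m, (d : ℝ) ≤ f s)
    (hmid : (k : ℝ) ≤ f (m + 1)) (htail : ∀ s, -1 ≤ f s) :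
    0 ≤ ∑ s ∈ Icc 1 (m * (d + 1) + k + 1), f s := by
  set n := m * (d + 1) + k + 1
  have hsplit : ∑ s ∈ Icc 1 n, f s =
      (∑ s ∈ Icc 1 m, f s) + f (m + 1) + ∑ s ∈ Ioc (m + 1) n, f s := by
    have hIcc (b : ℕ) : Icc 1 b = Ioc 0 b := Icc_add_one_left_eq_Ioc 0 b
    have hle : m + 1 ≤ n := by simp only [n, Nat.mul_succ]; omega
    rw [hIcc, hIcc, ← sum_Ioc_consecutive f (Nat.zero_le _) hle, sum_Ioc_succ_top (Nat.zero_le m)]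
  have hhead' : (m : ℝ) * d ≤ ∑ s ∈ Icc 1 m, f s := by
    simpa [mul_comm] using card_nsmul_le_sum _ f _ hhead
  have htail' : -((m * d + k : ℕ) : ℝ) ≤ ∑ s ∈ Ioc (m + 1) n, f s := by
    have hcard : #(Ioc (m + 1) n) = m * d + k := by
      simp only [Nat.card_Ioc, n, Nat.mul_succ]; omega
    simpa [hcard] using card_nsmul_le_sum (Ioc (m + 1) n) f (-1) fun s _ => htail s
  push_cast at htail'
  linarith

theorem cascade_of_reay_general (d : ℕ)
    (reay : ∀ r k : ℕ, 1 ≤ r → k ≤ d → ∀ X : Finset (Fin d → ℝ),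
      X.card = (r - 1) * (d + 1) + k + 1 → InGeneralPosition d X →
      (k : ℝ) ≤ hdim d (tverbergPoints d r X)) :
    ∀ X : Finset (Fin d → ℝ), InGeneralPosition d X →
      0 ≤ ∑ s ∈ Finset.Icc 1 X.card, hdim d (tverbergPoints d s X) := by
  have reay : ReayConjecture d := reay
  intro X hX
  rcases Nat.eq_zero_or_pos X.card with h0 | hpos
  · simp [h0]
  obtain ⟨m, k, hkd, hcard⟩ : ∃ m k, k ≤ d ∧ X.card = m * (d + 1) + k + 1 :=
    ⟨(X.card - 1) / (d + 1), (X.card - 1) % (d + 1), Nat.lt_succ_iff.1 (Nat.mod_lt _ d.succ_pos),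
      by rw [mul_comm, Nat.div_add_mod]; omega⟩
  rw [hcard]
  refine sum_Icc_nonneg_of_bounds _ (fun s hs => ?_) ?_ fun s => neg_one_le_hdim d _
  · obtain ⟨hs1, hsm⟩ := mem_Icc.1 hs
    refine reay.le_hdim_tverbergPoints hs1 hX ?_
    have := Nat.mul_le_mul_right (d + 1) hsm
    omega
  · exact reay (m + 1) k m.succ_pos hkd X (by simpa using hcard) hX

/-- For points in general position, Reay's dimension conjecture implies Kalai's cascade
conjecture. -/
theorem cascade_of_reay (d : ℕ) (hd : 1 ≤ d)
    (reay : ∀ r k : ℕ, 1 ≤ r → k ≤ d → ∀ X : Finset (Fin d → ℝ),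
      X.card = (r - 1) * (d + 1) + k + 1 → InGeneralPosition d X →
      (k : ℝ) ≤ hdim d (tverbergPoints d r X)) :
    ∀ X : Finset (Fin d → ℝ), InGeneralPosition d X →
      0 ≤ ∑ s ∈ Finset.Icc 1 X.card, hdim d (tverbergPoints d s X) :=
  cascade_of_reay_general d reay
end

section
/- Any 3N points in the plane can be partitioned into N triples such that the convex hulls (triangles or segments or points) of the triples have a common point. -/
/-!
Helly's theorem gives a centerpoint `p`: every open half-plane whose boundary passes through `p`
contains at most `2N` of the `3N` points. If no point equals `p`, sort the points by their angle
around `p` and group together the points in sorted positions `j`, `j + N`, `j + 2N`. An open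
half-plane meets the sorted points in a cyclic interval, so one containing a whole group would
contain at least `2N + 1` points; hence every group surrounds `p`.

A point equal to `p` lies in no open half-plane, so it can be moved off `p` without breaking the
centerpoint property provided it is moved outside every half-plane that already holds `2N` points.
All these half-planes contain the median, in angular order, of the `2N` points in any one of them,
so the reflection of that median through `p` will do. A group containing a moved point surrounds
`p` anyway, since originally that point was `p` itself.
-/

open Finset Module Real
open scoped RealInnerProductSpace

section Centerpoint

variable {ι E : Type*} [Fintype ι] [AddCommGroup E] [Module ℝ E] [FiniteDimensional ℝ E]

theorem exists_forall_mem_convexHull_of_card_gt (f : ι → E) :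
    ∃ p, ∀ S : Finset ι, finrank ℝ E * Fintype.card ι < (finrank ℝ E + 1) * #S →
      p ∈ convexHull ℝ (f '' S) := by
  classical
  set d := finrank ℝ E
  set n := Fintype.card ι
  obtain ⟨p, hp⟩ := Convex.helly_theorem' (𝕜 := ℝ) (F := fun S : Finset ι ↦ convexHull ℝ (f '' S))
    (s := {S | d * n < (d + 1) * #S}) (fun _ _ ↦ convex_convexHull ℝ _) <| by
    intro I hI _
    rcases I.eq_empty_or_nonempty with rfl | hIne
    · exact ⟨0, by simp⟩
    have hsum : ∑ S ∈ I, #Sᶜ < n := by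
      have : ∑ S ∈ I, (d + 1) * #Sᶜ < ∑ _S ∈ I, n := by
        refine sum_lt_sum_of_nonempty hIne fun S hS ↦ ?_
        have hS : d * n < (d + 1) * #S := by simpa using hI hS
        have := card_compl_add_card S
        nlinarith
      rw [← mul_sum, sum_const, smul_eq_mul] at this
      nlinarith
    obtain ⟨i, -, hi⟩ : ∃ i ∈ (univ : Finset ι), i ∉ I.biUnion (·ᶜ) :=
      exists_mem_notMem_of_card_lt_card ((card_biUnion_le).trans_lt (by simpa using hsum))
    refine ⟨f i, Set.mem_iInter₂.mpr fun S hS ↦ subset_convexHull ℝ _ ⟨i, ?_, rfl⟩⟩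
    by_contra hiS
    exact hi (mem_biUnion.mpr ⟨S, hS, by simpa using hiS⟩)
  exact ⟨p, fun S hS ↦ Set.mem_iInter₂.mp hp S (by simpa using hS)⟩

theorem exists_centerpoint (f : ι → E) :
    ∃ p, ∀ ℓ : E →ₗ[ℝ] ℝ,
      (finrank ℝ E + 1) * #{i | ℓ p < ℓ (f i)} ≤ finrank ℝ E * Fintype.card ι := by
  obtain ⟨p, hp⟩ := exists_forall_mem_convexHull_of_card_gt f
  refine ⟨p, fun ℓ ↦ ?_⟩
  by_contra! h
  have hsub : convexHull ℝ (f '' ↑({i | ℓ p < ℓ (f i)} : Finset ι)) ⊆ {x | ℓ p < ℓ x} :=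
    convexHull_min (by rintro _ ⟨i, hi, rfl⟩; simpa using hi) (convex_halfSpace_gt ℓ.isLinear _)
  exact lt_irrefl (ℓ p) (hsub (hp _ h))

end Centerpoint

theorem exists_forall_real_inner_sub_pos_of_notMem_convexHull {E : Type*} [NormedAddCommGroup E]
    [InnerProductSpace ℝ E] [FiniteDimensional ℝ E] {s : Set E} (hs : s.Finite) {p : E}
    (hp : p ∉ convexHull ℝ s) : ∃ w, ∀ x ∈ s, 0 < ⟪w, x - p⟫ := by
  obtain ⟨ℓ, u, hℓp, hℓs⟩ :=
    geometric_hahn_banach_point_closed (convex_convexHull ℝ s) (hs.isClosed_convexHull ℝ) hp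
  refine ⟨(InnerProductSpace.toDual ℝ E).symm ℓ, fun x hx ↦ ?_⟩
  rw [inner_sub_right, InnerProductSpace.toDual_symm_apply, InnerProductSpace.toDual_symm_apply]
  linarith [hℓs x (subset_convexHull ℝ s hx)]

theorem mem_convexHull_image_of_eq_of_ne {ι E : Type*} [AddCommGroup E] [Module ℝ E]
    {z z' : ι → E} {p : E} (h : ∀ i, z i ≠ p → z' i = z i) {s : Set ι}
    (hp : p ∈ convexHull ℝ (z' '' s)) : p ∈ convexHull ℝ (z '' s) := by
  by_cases hs : ∃ i ∈ s, z i = p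
  · obtain ⟨i, hi, rfl⟩ := hs
    exact subset_convexHull ℝ _ ⟨i, hi, rfl⟩
  push Not at hs
  rwa [Set.image_congr fun i hi ↦ (h i (hs i hi)).symm]

theorem Finset.exists_median {ι : Type*} (s : Finset ι) (hs : s.Nonempty) (g : ι → ℝ) :
    ∃ a ∈ s, 2 * #{i ∈ s | g i < g a} ≤ #s ∧ 2 * #{i ∈ s | g a < g i} ≤ #s := by
  set A := {a ∈ s | #s ≤ 2 * #{i ∈ s | g i ≤ g a}}
  have hA : A.Nonempty := by
    obtain ⟨b, hb, hmax⟩ := s.exists_max_image g hs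
    exact ⟨b, mem_filter.mpr ⟨hb, by rw [filter_true_of_mem hmax]; omega⟩⟩
  obtain ⟨a, haA, hmin⟩ := A.exists_min_image g hA
  obtain ⟨ha, hle⟩ := mem_filter.mp haA
  refine ⟨a, ha, ?_, ?_⟩
  · rcases ({i ∈ s | g i < g a} : Finset ι).eq_empty_or_nonempty with hlt | hlt
    · simp [hlt]
    obtain ⟨b, hb, hbmax⟩ := exists_max_image _ g hlt
    obtain ⟨hbs, hba⟩ := mem_filter.mp hb
    have hbA : b ∉ A := fun hbA ↦ (hmin b hbA).not_gt hba
    have hsub : {i ∈ s | g i < g a} ⊆ {i ∈ s | g i ≤ g b} :=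
      fun i hi ↦ mem_filter.mpr ⟨(mem_filter.mp hi).1, hbmax i hi⟩
    have := card_le_card hsub
    simp only [A, mem_filter, not_and, not_le] at hbA
    have := hbA hbs
    omega
  · have := card_filter_add_card_filter_not (s := s) (fun i ↦ g i ≤ g a)
    simp only [not_le] at this
    omega

theorem Set.OrdConnected.subset_Iio_or_subset_Ioi {α : Type*} [LinearOrder α] {s : Set α}
    (hs : s.OrdConnected) {x : α} (hx : x ∉ s) : s ⊆ Set.Iio x ∨ s ⊆ Set.Ioi x := by
  by_contra! h
  obtain ⟨y, hy, hyx⟩ := Set.not_subset.mp h.1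
  obtain ⟨y', hy', hxy'⟩ := Set.not_subset.mp h.2
  exact hx (hs.out hy' hy ⟨not_lt.mp hxy', not_lt.mp hyx⟩)

theorem le_card_add_of_ordConnected_or_compl {n g : ℕ} {P : Finset (Fin n)}
    (hP : (P : Set (Fin n)).OrdConnected ∨ (↑Pᶜ : Set (Fin n)).OrdConnected) {a b c : Fin n}
    (ha : a ∈ P) (hb : b ∈ P) (hc : c ∈ P) (hab : a < b) (hbc : b < c)
    (hgab : (b : ℕ) ≤ a + g + 1) (hgbc : (c : ℕ) ≤ b + g + 1) (hgca : n ≤ c + g + 1 - a) :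
    n ≤ #P + g := by
  rcases hP with hP | hP
  · have := card_le_card (s := Icc a c) fun l hl ↦ by
      simpa using hP.out ha hc (by simpa using hl)
    rw [Fin.card_Icc] at this
    omega
  have hcompl : #Pᶜ ≤ g := by
    have hnot : ∀ {x}, x ∈ P → x ∉ (↑Pᶜ : Set (Fin n)) := by simp
    rcases hP.subset_Iio_or_subset_Ioi (hnot hb) with hsub | hsub
    · rcases hP.subset_Iio_or_subset_Ioi (hnot ha) with hsub' | hsub'
      · refine (card_le_card (t := Iio a) fun l hl ↦ ?_).trans (by rw [Fin.card_Iio]; omega)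
        simpa using hsub' (by simpa using hl)
      · refine (card_le_card (t := Ioo a b) fun l hl ↦ ?_).trans (by rw [Fin.card_Ioo]; omega)
        simpa using And.intro (hsub' (by simpa using hl)) (hsub (by simpa using hl))
    · rcases hP.subset_Iio_or_subset_Ioi (hnot hc) with hsub' | hsub'
      · refine (card_le_card (t := Ioo b c) fun l hl ↦ ?_).trans (by rw [Fin.card_Ioo]; omega)
        simpa using And.intro (hsub (by simpa using hl)) (hsub' (by simpa using hl))
      · refine (card_le_card (t := Ioi c) fun l hl ↦ ?_).trans (by rw [Fin.card_Ioi]; omega)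
        simpa using hsub' (by simpa using hl)
  have := card_compl_add_card P
  simp only [Fintype.card_fin] at this
  omega

theorem Real.cos_pos_iff_of_neg_two_pi_lt_of_lt_two_pi {x : ℝ} (h₁ : -(2 * π) < x)
    (h₂ : x < 2 * π) :
    0 < cos x ↔ x < -(3 * π / 2) ∨ (-(π / 2) < x ∧ x < π / 2) ∨ 3 * π / 2 < x := by
  constructor
  · intro hpos
    by_contra! hx
    rcases le_or_gt 0 x with h0 | h0
    · exact hpos.not_ge (cos_nonpos_of_pi_div_two_le_of_le (hx.2.1 (by linarith)) (by linarith))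
    · rw [← cos_neg] at hpos
      exact hpos.not_ge (cos_nonpos_of_pi_div_two_le_of_le
        (by by_contra! h; linarith [hx.2.1 (by linarith)]) (by linarith))
  · rintro (hx | hx | hx)
    · rw [← cos_add_two_pi]
      exact cos_pos_of_mem_Ioo ⟨by linarith, by linarith [pi_pos]⟩
    · exact cos_pos_of_mem_Ioo hx
    · rw [← cos_sub_two_pi]
      exact cos_pos_of_mem_Ioo ⟨by linarith, by linarith [pi_pos]⟩

theorem ordConnected_or_compl_cos_pos {ι : Type*} [Preorder ι] {θ : ι → ℝ} (hθ : Monotone θ)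
    (hθπ : ∀ l, θ l ∈ Set.Ioc (-π) π) {β : ℝ} (hβ : β ∈ Set.Ioc (-π) π) :
    {l | 0 < cos (θ l - β)}.OrdConnected ∨ {l | 0 < cos (θ l - β)}ᶜ.OrdConnected := by
  obtain ⟨hβ₁, hβ₂⟩ := hβ
  have hcos : ∀ l, 0 < cos (θ l - β) ↔
      θ l < β - 3 * π / 2 ∨ (β - π / 2 < θ l ∧ θ l < β + π / 2) ∨ β + 3 * π / 2 < θ l := by
    intro l
    obtain ⟨h₁, h₂⟩ := hθπ l
    rw [cos_pos_iff_of_neg_two_pi_lt_of_lt_two_pi (by linarith) (by linarith)]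
    constructor <;> rintro (h | ⟨h, h'⟩ | h) <;> first
      | (left; linarith) | (right; left; constructor <;> linarith) | (right; right; linarith)
  -- the arc where `0 < cos (θ - β)` wraps around `±π` exactly when `π / 2 < |β|`
  rcases lt_or_ge (π / 2) β with hβ' | hβ'
  · right
    convert (Set.ordConnected_Icc (a := β - 3 * π / 2) (b := β - π / 2)).preimage_mono hθ using 1
    ext l
    obtain ⟨h₁, h₂⟩ := hθπ l
    simp only [Set.mem_compl_iff, Set.mem_ofPred_eq, hcos, Set.mem_preimage, Set.mem_Icc, not_or,
      not_and, not_lt]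
    exact ⟨fun ⟨h, h', _⟩ ↦ ⟨h, by by_contra! h''; linarith [h' h'']⟩,
      fun ⟨h, h'⟩ ↦ ⟨h, fun _ ↦ by linarith, by linarith⟩⟩
  rcases lt_or_ge β (-(π / 2)) with hβ'' | hβ''
  · right
    convert (Set.ordConnected_Icc (a := β + π / 2) (b := β + 3 * π / 2)).preimage_mono hθ using 1
    ext l
    obtain ⟨h₁, h₂⟩ := hθπ l
    simp only [Set.mem_compl_iff, Set.mem_ofPred_eq, hcos, Set.mem_preimage, Set.mem_Icc, not_or,
      not_and, not_lt]
    exact ⟨fun ⟨_, h, h'⟩ ↦ ⟨h (by linarith), h'⟩, fun ⟨h, h'⟩ ↦ ⟨by linarith, fun _ ↦ h, h'⟩⟩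
  · left
    convert (Set.ordConnected_Ioo (a := β - π / 2) (b := β + π / 2)).preimage_mono hθ using 1
    ext l
    obtain ⟨h₁, h₂⟩ := hθπ l
    simp only [Set.mem_ofPred_eq, hcos, Set.mem_preimage, Set.mem_Ioo]
    constructor
    · rintro (h | h | h)
      exacts [absurd h (by linarith), h, absurd h (by linarith)]
    · exact fun h ↦ Or.inr (Or.inl h)

theorem Complex.real_inner_eq_norm_mul_norm_mul_cos_arg_sub {w v : ℂ} (hw : w ≠ 0) (hv : v ≠ 0) :
    ⟪w, v⟫ = ‖w‖ * ‖v‖ * Real.cos (v.arg - w.arg) := by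
  rw [Real.cos_sub, Complex.cos_arg hv, Complex.cos_arg hw, Complex.sin_arg, Complex.sin_arg,
    Complex.inner]
  field_simp
  simp [Complex.mul_re]

/-- The tangent of the angle from `w₀` to `v`. -/
noncomputable def halfPlaneSlope (w₀ v : ℂ) : ℝ := ⟪Complex.I * w₀, v⟫ / ⟪w₀, v⟫

theorem Complex.real_inner_eq_div_re_mul_add_div_im_mul {w₀ : ℂ} (hw₀ : w₀ ≠ 0) (w v : ℂ) :
    ⟪w, v⟫ = (w / w₀).re * ⟪w₀, v⟫ + (w / w₀).im * ⟪Complex.I * w₀, v⟫ := by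
  have hw : w = (w / w₀).re • w₀ + (w / w₀).im • (Complex.I * w₀) := by
    simp only [Complex.real_smul, ← mul_assoc, ← add_mul, Complex.re_add_im, div_mul_cancel₀ _ hw₀]
  conv_lhs => rw [hw]
  rw [inner_add_left, real_inner_smul_left, real_inner_smul_left]

theorem mul_halfPlaneSlope_sub_pos {w₀ w v a : ℂ} (hv₀ : 0 < ⟪w₀, v⟫) (ha₀ : 0 < ⟪w₀, a⟫)
    (hv : 0 < ⟪w, v⟫) (ha : ⟪w, a⟫ ≤ 0) :
    0 < (w / w₀).im * (halfPlaneSlope w₀ v - halfPlaneSlope w₀ a) := by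
  have hw₀ : w₀ ≠ 0 := by rintro rfl; simp at hv₀
  rw [Complex.real_inner_eq_div_re_mul_add_div_im_mul hw₀] at hv ha
  have hv' : ⟪Complex.I * w₀, v⟫ = halfPlaneSlope w₀ v * ⟪w₀, v⟫ := by
    rw [halfPlaneSlope, div_mul_cancel₀ _ hv₀.ne']
  have ha' : ⟪Complex.I * w₀, a⟫ = halfPlaneSlope w₀ a * ⟪w₀, a⟫ := by
    rw [halfPlaneSlope, div_mul_cancel₀ _ ha₀.ne']
  rw [hv'] at hv
  rw [ha'] at ha
  have h1 : 0 < (w / w₀).re + (w / w₀).im * halfPlaneSlope w₀ v := by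
    by_contra! h; nlinarith
  have h2 : (w / w₀).re + (w / w₀).im * halfPlaneSlope w₀ a ≤ 0 := by
    by_contra! h; nlinarith
  nlinarith

theorem two_mul_card_filter_real_inner_pos_le {ι : Type*} {v : ι → ℂ} {w₀ w : ℂ} {s : Finset ι}
    (hs : ∀ i ∈ s, 0 < ⟪w₀, v i⟫) {a : ι} (ha₀ : 0 < ⟪w₀, v a⟫)
    (hlt : 2 * #{i ∈ s | halfPlaneSlope w₀ (v i) < halfPlaneSlope w₀ (v a)} ≤ #s)
    (hgt : 2 * #{i ∈ s | halfPlaneSlope w₀ (v a) < halfPlaneSlope w₀ (v i)} ≤ #s)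
    (ha : ⟪w, v a⟫ ≤ 0) : 2 * #{i ∈ s | 0 < ⟪w, v i⟫} ≤ #s := by
  have hsign : ∀ i ∈ {i ∈ s | 0 < ⟪w, v i⟫},
      0 < (w / w₀).im * (halfPlaneSlope w₀ (v i) - halfPlaneSlope w₀ (v a)) := fun i hi ↦
    mul_halfPlaneSlope_sub_pos (hs i (mem_filter.mp hi).1) ha₀ (mem_filter.mp hi).2 ha
  rcases lt_trichotomy (w / w₀).im 0 with hneg | hzero | hpos
  · refine le_trans (Nat.mul_le_mul_left 2 (card_le_card fun i hi ↦ ?_)) hlt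
    have := hsign i hi
    exact mem_filter.mpr ⟨(mem_filter.mp hi).1, by nlinarith⟩
  · have : {i ∈ s | 0 < ⟪w, v i⟫} = ∅ := eq_empty_of_forall_notMem fun i hi ↦ by
      simpa [hzero] using hsign i hi
    rw [this, card_empty]
    exact Nat.zero_le _
  · refine le_trans (Nat.mul_le_mul_left 2 (card_le_card fun i hi ↦ ?_)) hgt
    have := hsign i hi
    exact mem_filter.mpr ⟨(mem_filter.mp hi).1, by nlinarith⟩

noncomputable def halfPlaneCount {ι : Type*} [Fintype ι] (z : ι → ℂ) (p w : ℂ) : ℕ :=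
  #{i | 0 < ⟪w, z i - p⟫}

theorem exists_forall_halfPlaneCount_le {ι : Type*} [Fintype ι] (z : ι → ℂ) :
    ∃ p, ∀ w, 3 * halfPlaneCount z p w ≤ 2 * Fintype.card ι := by
  obtain ⟨p, hp⟩ := exists_centerpoint z
  refine ⟨p, fun w ↦ ?_⟩
  have := hp (innerSL ℝ w).toLinearMap
  simp only [Complex.finrank_real_complex] at this
  simpa [halfPlaneCount, inner_sub_right] using this

section Replacement

variable {ι : Type*} [Fintype ι] [DecidableEq ι]

theorem halfPlaneCount_update_le {z : ι → ℂ} {p : ℂ} {i₀ : ι} (hi₀ : z i₀ = p) (u w : ℂ) :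
    halfPlaneCount (Function.update z i₀ u) p w ≤ halfPlaneCount z p w + 1 := by
  refine (card_le_card fun i hi ↦ ?_).trans (card_insert_le i₀ _)
  rcases eq_or_ne i i₀ with rfl | hne
  · exact mem_insert_self _ _
  · exact mem_insert_of_mem (by simpa [hne] using hi)

theorem halfPlaneCount_update_le_of_inner_nonpos {z : ι → ℂ} {p : ℂ} {i₀ : ι} {u w : ℂ}
    (hu : ⟪w, u - p⟫ ≤ 0) : halfPlaneCount (Function.update z i₀ u) p w ≤ halfPlaneCount z p w := by
  refine card_le_card fun i hi ↦ ?_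
  rcases eq_or_ne i i₀ with rfl | hne
  · simp only [mem_filter, mem_univ, Function.update_self, true_and] at hi
    exact absurd hi hu.not_gt
  · simpa [hne] using hi

theorem halfPlaneCount_le_card_filter_add {z : ι → ℂ} {p : ℂ} {i₀ : ι} (hi₀ : z i₀ = p)
    {V : Finset ι} (hi₀V : i₀ ∉ V) (w : ℂ) :
    halfPlaneCount z p w ≤ #{i ∈ V | 0 < ⟪w, z i - p⟫} + (Fintype.card ι - 1 - #V) := by
  have hsub : ({i | 0 < ⟪w, z i - p⟫} : Finset ι) ⊆
      {i ∈ V | 0 < ⟪w, z i - p⟫} ∪ (univ.erase i₀) \ V := fun i hi ↦ by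
    have hi : 0 < ⟪w, z i - p⟫ := (mem_filter.mp hi).2
    by_cases hiV : i ∈ V
    · exact mem_union_left _ (mem_filter.mpr ⟨hiV, hi⟩)
    · refine mem_union_right _ (mem_sdiff.mpr ⟨mem_erase.mpr ⟨?_, mem_univ i⟩, hiV⟩)
      rintro rfl
      simp [hi₀] at hi
  refine (card_le_card hsub).trans ((card_union_le _ _).trans (le_of_eq ?_))
  rw [card_sdiff_of_subset fun i hi ↦ mem_erase.mpr ⟨by rintro rfl; exact hi₀V hi, mem_univ i⟩,
    card_erase_of_mem (mem_univ i₀), card_univ]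

theorem exists_ne_halfPlaneCount_update_le {N : ℕ} (hcard : Fintype.card ι = 3 * N) {z : ι → ℂ}
    {p : ℂ} (hz : ∀ w, halfPlaneCount z p w ≤ 2 * N) {i₀ : ι} (hi₀ : z i₀ = p) :
    ∃ u ≠ p, ∀ w, halfPlaneCount (Function.update z i₀ u) p w ≤ 2 * N := by
  have hN := Fintype.card_pos_iff.mpr ⟨i₀⟩
  by_cases hsat : ∀ w, halfPlaneCount z p w ≠ 2 * N
  · refine ⟨p + 1, by simp, fun w ↦ ?_⟩
    have := halfPlaneCount_update_le hi₀ (p + 1) w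
    have := hz w
    have := hsat w
    omega
  push Not at hsat
  obtain ⟨w₀, hw₀⟩ := hsat
  set V : Finset ι := {i | 0 < ⟪w₀, z i - p⟫}
  have hV : #V = 2 * N := hw₀
  have hi₀V : i₀ ∉ V := by simp [V, hi₀]
  obtain ⟨a, haV, hlt, hgt⟩ :=
    V.exists_median (card_pos.mp (by omega)) fun i ↦ halfPlaneSlope w₀ (z i - p)
  have ha₀ : 0 < ⟪w₀, z a - p⟫ := (mem_filter.mp haV).2
  refine ⟨p - (z a - p), fun h ↦ ?_, fun w ↦ ?_⟩
  · rw [sub_eq_self.mp h, inner_zero_right] at ha₀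
    exact lt_irrefl _ ha₀
  by_cases ha : 0 < ⟪w, z a - p⟫
  · refine (halfPlaneCount_update_le_of_inner_nonpos ?_).trans (hz w)
    rw [sub_sub_cancel_left, inner_neg_right]
    exact neg_nonpos.mpr ha.le
  -- a half-plane missing `a` holds at most `N` points of `V` and at most `N - 1` outside `V`
  suffices halfPlaneCount z p w < 2 * N by
    have := halfPlaneCount_update_le hi₀ (p - (z a - p)) w
    omega
  have hinV := two_mul_card_filter_real_inner_pos_le (v := fun i ↦ z i - p)
    (fun i hi ↦ (mem_filter.mp hi).2) ha₀ hlt hgt (not_lt.mp ha)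
  change 2 * #{i ∈ V | 0 < ⟪w, z i - p⟫} ≤ #V at hinV
  have := halfPlaneCount_le_card_filter_add hi₀ hi₀V w
  omega

theorem exists_forall_ne_halfPlaneCount_le {N : ℕ} (hcard : Fintype.card ι = 3 * N) (z : ι → ℂ)
    (p : ℂ) (hz : ∀ w, halfPlaneCount z p w ≤ 2 * N) :
    ∃ z' : ι → ℂ, (∀ i, z' i ≠ p) ∧ (∀ i, z i ≠ p → z' i = z i) ∧
      ∀ w, halfPlaneCount z' p w ≤ 2 * N := by
  induction hm : #{i | z i = p} generalizing z with
  | zero =>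
    refine ⟨z, fun i hi ↦ ?_, fun _ _ ↦ rfl, hz⟩
    have hi : i ∈ ({i | z i = p} : Finset ι) := by simpa using hi
    simp [card_eq_zero.mp hm] at hi
  | succ m ih =>
    obtain ⟨i₀, hi₀⟩ := card_pos.mp (by omega : 0 < #{i | z i = p})
    replace hi₀ : z i₀ = p := (mem_filter.mp hi₀).2
    obtain ⟨u, hu, hzu⟩ := exists_ne_halfPlaneCount_update_le hcard hz hi₀
    have hm' : #{i | Function.update z i₀ u i = p} = m := by
      have : ({i | Function.update z i₀ u i = p} : Finset ι) =
          ({i | z i = p} : Finset ι).erase i₀ := by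
        ext i
        rcases eq_or_ne i i₀ with rfl | hne <;> simp [*]
      rw [this, card_erase_of_mem (by simpa using hi₀), hm, Nat.add_sub_cancel]
    obtain ⟨z', hz'p, hz'z, hz'⟩ := ih _ hzu hm'
    refine ⟨z', hz'p, fun i hi ↦ ?_, hz'⟩
    have hne : i ≠ i₀ := by rintro rfl; exact hi hi₀
    rw [hz'z i (by simpa [hne] using hi), Function.update_of_ne hne]

end Replacement

theorem birch_of_forall_ne {N : ℕ} {z : Fin (3 * N) → ℂ} {p : ℂ} (hzp : ∀ i, z i ≠ p)
    (hz : ∀ w, halfPlaneCount z p w ≤ 2 * N) :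
    ∃ c : Fin (3 * N) → Fin N, (∀ j, #{i | c i = j} = 3) ∧
      ∀ j, p ∈ convexHull ℝ (z '' {i | c i = j}) := by
  set σ := Tuple.sort fun i ↦ (z i - p).arg
  have hσ : Monotone ((fun i ↦ (z i - p).arg) ∘ σ) := Tuple.monotone_sort _
  refine ⟨fun i ↦ (σ.symm i).modNat, fun j ↦ ?_, fun j ↦ ?_⟩
  · rw [card_equiv (σ.symm.trans finProdFinEquiv.symm) (t := univ ×ˢ {j}) (by simp [eq_comm])]
    simp
  by_contra hp
  obtain ⟨w, hw⟩ := exists_forall_real_inner_sub_pos_of_notMem_convexHull (Set.toFinite _) hp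
  have hmem : ∀ k : Fin 3, 0 < ⟪w, z (σ (finProdFinEquiv (k, j))) - p⟫ := fun k ↦
    hw _ ⟨_, by simp [Fin.modNat, Fin.ext_iff, Nat.mod_eq_of_lt j.isLt], rfl⟩
  have hw₀ : w ≠ 0 := by rintro rfl; simpa using hmem 0
  set P : Finset (Fin (3 * N)) := {l | 0 < ⟪w, z (σ l) - p⟫}
  have hPcard : #P = halfPlaneCount z p w := card_equiv σ (by simp [P])
  have hP : (P : Set (Fin (3 * N))).OrdConnected ∨ (↑Pᶜ : Set (Fin (3 * N))).OrdConnected := by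
    have hcos : (P : Set (Fin (3 * N))) = {l | 0 < Real.cos ((z (σ l) - p).arg - w.arg)} := by
      ext l
      simp only [P, coe_filter, mem_univ, true_and, Set.mem_ofPred_eq,
        Complex.real_inner_eq_norm_mul_norm_mul_cos_arg_sub hw₀ (sub_ne_zero.mpr (hzp _))]
      exact mul_pos_iff_of_pos_left (mul_pos (norm_pos_iff.mpr hw₀)
        (norm_pos_iff.mpr (sub_ne_zero.mpr (hzp _))))
    rw [coe_compl, hcos]
    exact ordConnected_or_compl_cos_pos hσ (fun _ ↦ Complex.arg_mem_Ioc _) (Complex.arg_mem_Ioc _)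
  have hj := j.isLt
  have := le_card_add_of_ordConnected_or_compl (g := N - 1) hP (by simpa [P] using hmem 0)
    (by simpa [P] using hmem 1) (by simpa [P] using hmem 2) (by simp [Fin.lt_def]; omega)
    (by simp [Fin.lt_def]; omega) (by simp; omega) (by simp; omega) (by simp; omega)
  have := hz w
  omega

theorem birch_complex (N : ℕ) (z : Fin (3 * N) → ℂ) :
    ∃ c : Fin (3 * N) → Fin N, (∀ j, #{i | c i = j} = 3) ∧
      (⋂ j, convexHull ℝ (z '' {i | c i = j})).Nonempty := by
  obtain ⟨p, hp⟩ := exists_forall_halfPlaneCount_le z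
  obtain ⟨z', hz'p, hz'z, hz'⟩ := exists_forall_ne_halfPlaneCount_le (Fintype.card_fin _) z p
    fun w ↦ by have := hp w; simp only [Fintype.card_fin] at this; omega
  obtain ⟨c, hc, hpc⟩ := birch_of_forall_ne hz'p hz'
  exact ⟨c, hc, p, Set.mem_iInter.mpr fun j ↦ mem_convexHull_image_of_eq_of_ne hz'z (hpc j)⟩

theorem birch_of_finrank_eq_two {E : Type*} [AddCommGroup E] [Module ℝ E]
    (hE : finrank ℝ E = 2) (N : ℕ) (f : Fin (3 * N) → E) :
    ∃ c : Fin (3 * N) → Fin N, (∀ j, #{i | c i = j} = 3) ∧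
      (⋂ j, convexHull ℝ (f '' {i | c i = j})).Nonempty := by
  have : Module.Finite ℝ E := Module.finite_of_finrank_eq_succ hE
  let e : E ≃ₗ[ℝ] ℂ := LinearEquiv.ofFinrankEq E ℂ (by simp [hE])
  obtain ⟨c, hc, q, hq⟩ := birch_complex N (e ∘ f)
  refine ⟨c, hc, e.symm q, Set.mem_iInter.mpr fun j ↦ ?_⟩
  have hj := Set.mem_image_of_mem e.symm (Set.mem_iInter.mp hq j)
  rw [← LinearEquiv.coe_coe, e.symm.toLinearMap.image_convexHull, ← Set.image_comp] at hj
  simpa [Function.comp_def] using hj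

theorem birch_general (N : ℕ) (f : Fin (3 * N) → (Fin 2 → ℝ)) :
    ∃ c : Fin (3 * N) → Fin N,
      (∀ j : Fin N, (Finset.univ.filter (fun i => c i = j)).card = 3) ∧
      (⋂ j : Fin N, convexHull ℝ (f '' {i | c i = j})).Nonempty :=
  birch_of_finrank_eq_two (by simp) N f

/-- Birch's theorem: any 3N points in the plane (repetitions allowed) can be partitioned
into N triples whose convex hulls have a common point. -/
theorem birch (N : ℕ) (hN : 1 ≤ N) (f : Fin (3 * N) → (Fin 2 → ℝ)) :
    ∃ c : Fin (3 * N) → Fin N,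
      (∀ j : Fin N, (Finset.univ.filter (fun i => c i = j)).card = 3) ∧
      (⋂ j : Fin N, convexHull ℝ (f '' {i | c i = j})).Nonempty :=
  birch_general N f
end

section
/- There exists a set of (r-1)2^d points in Z^d such that for every partition into r parts, the intersection of the convex hulls of the parts contains no integer point; hence the integer Tverberg number satisfies L(r,d) > (r-1)2^d. -/
/-!
Take `r - 1` copies of each vertex of the unit cube `[0,1]^d`. A lattice point in the convex
hull of a set of cube vertices lies in the cube, so it is itself a vertex, i.e. an extreme point
of the cube; an extreme point of a convex set lying in the convex hull of a subset must belong
to that subset. Hence a lattice point common to the hulls of all `r` parts would be one vertex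
occurring in each of the `r` parts, while it occurs only `r - 1` times.
-/

open Set

theorem mem_of_mem_convexHull_of_mem_extremePoints {𝕜 E : Type*} [Field 𝕜] [LinearOrder 𝕜]
    [IsStrictOrderedRing 𝕜] [AddCommGroup E] [Module 𝕜 E] {S C : Set E} {x : E}
    (hC : Convex 𝕜 C) (hSC : S ⊆ C) (hxC : x ∈ C.extremePoints 𝕜)
    (hxS : x ∈ convexHull 𝕜 S) : x ∈ S :=
  extremePoints_convexHull_subset <|
    inter_extremePoints_subset_extremePoints_of_subset (hC.convexHull_subset_iff.2 hSC) ⟨hxS, hxC⟩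

theorem Int.cast_mem_pair_of_mem_Icc {R : Type*} [Ring R] [LinearOrder R] [IsStrictOrderedRing R]
    {m : ℤ} (hm : (m : R) ∈ Icc 0 1) : (m : R) ∈ ({0, 1} : Set R) := by
  obtain ⟨h0, h1⟩ := hm
  have : m = 0 ∨ m = 1 := by
    have : 0 ≤ m := by exact_mod_cast h0
    have : m ≤ 1 := by exact_mod_cast h1
    omega
  rcases this with rfl | rfl <;> simp

theorem mem_of_intPoint_mem_convexHull {ι : Type*} {S : Set (ι → ℝ)}
    (hS : S ⊆ univ.pi fun _ => {0, 1}) {p : ι → ℝ} (hp : ∀ k, ∃ m : ℤ, p k = m)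
    (hpS : p ∈ convexHull ℝ S) : p ∈ S := by
  have hcube : Convex ℝ (univ.pi fun _ : ι => Icc (0 : ℝ) 1) :=
    convex_pi fun _ _ => convex_Icc 0 1
  have hScube : S ⊆ univ.pi fun _ => Icc 0 1 :=
    hS.trans (pi_mono fun _ _ => by simp [insert_subset_iff])
  have hp_vertex : p ∈ (univ.pi fun _ : ι => Icc (0 : ℝ) 1).extremePoints ℝ := by
    rw [extremePoints_pi, mem_univ_pi]
    intro k
    obtain ⟨m, hm⟩ := hp k
    rw [extremePoints_Icc zero_le_one, hm]
    exact Int.cast_mem_pair_of_mem_Icc (hm ▸ hcube.convexHull_subset_iff.2 hScube hpS k trivial)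
  exact mem_of_mem_convexHull_of_mem_extremePoints hcube hScube hp_vertex hpS

/-- Pigeonhole: `κ` separates the points of each fibre of `f`, so a fibre has at most `card γ`
points and cannot meet all `r` colour classes. -/
theorem not_forall_mem_image_colorClass {α β γ : Type*} [Fintype γ] {r : ℕ}
    (c : α → Fin r) (f : α → β) (κ : α → γ) (hκ : Fintype.card γ < r)
    (hinj : Function.Injective fun i => (f i, κ i)) (b : β) :
    ¬ ∀ j, b ∈ f '' {i | c i = j} := by
  intro hb
  choose g hgc hgf using hb
  have hκg : Function.Injective (κ ∘ g) := fun j j' h => by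
    have : g j = g j' := hinj (Prod.ext (by simp [hgf]) h)
    rw [← hgc j, ← hgc j', this]
  simpa using (Fintype.card_le_of_injective _ hκg).trans_lt hκ

theorem integer_tverberg_lower_bound_general (d r : ℕ) (hr : 2 ≤ r) :
    ∃ f : Fin ((r - 1) * 2 ^ d) → (Fin d → ℝ),
      (∀ i k, ∃ m : ℤ, f i k = (m : ℝ)) ∧
      ∀ c : Fin ((r - 1) * 2 ^ d) → Fin r,
        ¬ ∃ p : Fin d → ℝ, (∀ k, ∃ m : ℤ, p k = (m : ℝ)) ∧
          ∀ j : Fin r, p ∈ convexHull ℝ (f '' {i | c i = j}) := by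
  let e : Fin ((r - 1) * 2 ^ d) ≃ Fin (r - 1) × (Fin d → Fin 2) :=
    finProdFinEquiv.symm.trans ((Equiv.refl _).prodCongr finFunctionFinEquiv.symm)
  let vertex (x : Fin d → Fin 2) (k : Fin d) : ℝ := ((x k : ℕ) : ℝ)
  have hvertex : Function.Injective vertex := fun x y h =>
    funext fun k => Fin.val_injective (by simpa [vertex] using congrFun h k)
  refine ⟨fun i => vertex (e i).2, fun i k => ⟨((e i).2 k : ℕ), by simp [vertex]⟩, ?_⟩
  rintro c ⟨p, hp, hpc⟩
  have hinj : Function.Injective fun i => (vertex (e i).2, (e i).1) := fun i i' h => by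
    simp only [Prod.mk.injEq] at h
    exact e.injective (Prod.ext h.2 (hvertex h.1))
  refine not_forall_mem_image_colorClass c _ (fun i => (e i).1) (by rw [Fintype.card_fin]; omega) hinj p
    fun j => mem_of_intPoint_mem_convexHull ?_ hp (hpc j)
  rintro _ ⟨i, -, rfl⟩ k -
  rcases Fin.exists_fin_two.mp ⟨(e i).2 k, rfl⟩ with h | h <;> simp [vertex, h]

/-- Lower bound for the integer Tverberg number: there is a family of (r-1)·2^d lattice
points in ℤ^d (viewed in ℝ^d) such that no partition into r parts has a lattice point
common to the convex hulls of all parts; hence L(r,d) > (r-1)·2^d. -/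
theorem integer_tverberg_lower_bound (d r : ℕ) (hd : 1 ≤ d) (hr : 2 ≤ r) :
    ∃ f : Fin ((r - 1) * 2 ^ d) → (Fin d → ℝ),
      (∀ i k, ∃ m : ℤ, f i k = (m : ℝ)) ∧
      ∀ c : Fin ((r - 1) * 2 ^ d) → Fin r,
        ¬ ∃ p : Fin d → ℝ, (∀ k, ∃ m : ℤ, p k = (m : ℝ)) ∧
          ∀ j : Fin r, p ∈ convexHull ℝ (f '' {i | c i = j}) :=
  integer_tverberg_lower_bound_general d r hr
end
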